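/- arXiv:2305.04438 — 7 statements merged into one kernel-verified Lean document; each statement's English description precedes it below -/
import Mathlib

section
/- Fix an integer k ≥ 2 and let Ψ be the Max-kAND instance on variables {1,…,k} with two clauses of weight 1 each: C^+ = ({1,…,k}, ∅) (all k literals positive) and C^− = (∅, {1,…,k}) (all k literals negative). Then val_Ψ = 1/2, every variable of Ψ has bias 0, and for every bias partition t and rounding vector p one has Obl_k^{t,p}(Ψ) = 2^{−k}. Consequently, every oblivious algorithm satisfies α(Obl_k^{t,p}) ≤ 2^{−(k−1)}. -/
open scoped BigOperators
open Classical

/-- An instance of Max-kAND on `n` Boolean variables. -/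
structure KAndInstance (k n : ℕ) where
  m : ℕ
  pos : Fin m → Finset (Fin n)
  neg : Fin m → Finset (Fin n)
  w : Fin m → ℝ
  disj : ∀ j, Disjoint (pos j) (neg j)
  arity : ∀ j, (pos j ∪ neg j).card = k
  w_nonneg : ∀ j, 0 ≤ w j
  w_total : 0 < ∑ j, w j
  cover : ∀ v : Fin n, ∃ j, 0 < w j ∧ (v ∈ pos j ∨ v ∈ neg j)

namespace KAndInstance
variable {k n : ℕ} (Ψ : KAndInstance k n)

/-- A clause is satisfied by a ±1 assignment (encoded as `Bool`, `true` = +1). -/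
def sat (x : Fin n → Bool) (j : Fin Ψ.m) : Prop :=
  (∀ v ∈ Ψ.pos j, x v = true) ∧ (∀ v ∈ Ψ.neg j, x v = false)

/-- The (fractional) value of an assignment. -/
noncomputable def val (x : Fin n → Bool) : ℝ :=
  (∑ j, if Ψ.sat x j then Ψ.w j else 0) / (∑ j, Ψ.w j)

/-- The value of the instance: the maximum value over assignments. -/
noncomputable def optVal : ℝ := ⨆ x : Fin n → Bool, Ψ.val x

/-- Total weight of clauses containing `v` positively. -/
noncomputable def wpos (v : Fin n) : ℝ := ∑ j, if v ∈ Ψ.pos j then Ψ.w j else 0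

/-- Total weight of clauses containing `v` negatively. -/
noncomputable def wneg (v : Fin n) : ℝ := ∑ j, if v ∈ Ψ.neg j then Ψ.w j else 0

/-- The bias of a variable. -/
noncomputable def bias (v : Fin n) : ℝ := (Ψ.wpos v - Ψ.wneg v) / (Ψ.wpos v + Ψ.wneg v)

end KAndInstance

/-- A symmetric partition of `[-1,1]` into `2ℓ+1` bias classes, given by
`0 ≤ t 0 < t 1 < ⋯ < t ℓ = 1` (values of `t` beyond index `ℓ` are irrelevant). -/
structure BiasPartition (ℓ : ℕ) where
  t : ℕ → ℝ
  t0_nonneg : 0 ≤ t 0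
  mono : ∀ i, i < ℓ → t i < t (i + 1)
  t_top : t ℓ = 1

namespace BiasPartition
variable {ℓ : ℕ} (T : BiasPartition ℓ)

/-- Raw index (in `{0,…,2ℓ}`, with `ℓ` = bias class `0`, `ℓ+i` = class `+i`,
`ℓ-i` = class `-i`) of the bias class containing a bias value `b`. -/
noncomputable def classIdx (b : ℝ) : ℕ :=
  if |b| ≤ T.t 0 then ℓ
  else if 0 < b then ℓ + sInf {i : ℕ | b ≤ T.t i}
  else ℓ - sInf {i : ℕ | -b ≤ T.t i}

end BiasPartition

/-- Extends a rounding vector `p = (p 1, …, p ℓ)` to a function on raw class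
indices: the probability of assigning `+1` to a variable in raw class `r`. -/
noncomputable def pExt (ℓ : ℕ) (p : ℕ → ℝ) (r : ℕ) : ℝ :=
  if r = ℓ then 1/2 else if ℓ < r then p (r - ℓ) else 1 - p (ℓ - r)

/-- The probability with which the oblivious algorithm rounds a variable of
bias `b` to `+1`. -/
noncomputable def roundProb {ℓ : ℕ} (T : BiasPartition ℓ) (p : ℕ → ℝ) (b : ℝ) : ℝ :=
  pExt ℓ p (T.classIdx b)

/-- `Obl_k^{t,p}(Ψ)`: the expected value of the random assignment produced by the
oblivious algorithm, which independently rounds each variable to `+1` with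
probability `roundProb T p (bias v)`. -/
noncomputable def oblValue {k n ℓ : ℕ} (T : BiasPartition ℓ) (p : ℕ → ℝ)
    (Ψ : KAndInstance k n) : ℝ :=
  ∑ x : Fin n → Bool,
    (∏ v, if x v then roundProb T p (Ψ.bias v) else 1 - roundProb T p (Ψ.bias v)) * Ψ.val x

/-- `α(Obl_k^{t,p})`: the approximation ratio of the oblivious algorithm, i.e. the
infimum over all instances `Ψ` of `Obl_k^{t,p}(Ψ) / val_Ψ`. -/
noncomputable def oblRatio (k ℓ : ℕ) (T : BiasPartition ℓ) (p : ℕ → ℝ) : ℝ :=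
  sInf { r : ℝ | ∃ (n : ℕ) (Ψ : KAndInstance k n), r = oblValue T p Ψ / Ψ.optVal }

/-- `γ_k`. -/
noncomputable def gammaStar (k : ℕ) : ℝ := if Odd k then 1/k else 1/(k+1)

/-- `p*_k = (1+γ_k)/2`. -/
noncomputable def pStar (k : ℕ) : ℝ := (1 + gammaStar k)/2

/-- `α*_k = 2 (p*_k (1-p*_k))^⌊k/2⌋`. -/
noncomputable def alphaStar (k : ℕ) : ℝ := 2 * (pStar k * (1 - pStar k))^(k/2)

/-- The Max-kAND instance on variables `{1,…,k}` with two unit-weight clauses: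
`C⁺` wanting all variables `+1` and `C⁻` wanting all variables `-1`. -/
def twoClauseInstance (k : ℕ) : KAndInstance k k where
  m := 2
  pos := fun j => if j = 0 then Finset.univ else ∅
  neg := fun j => if j = 0 then ∅ else Finset.univ
  w := fun _ => 1
  disj := by
    intro j
    by_cases h : j = 0 <;> simp [h]
  arity := by
    intro j
    by_cases h : j = 0 <;> simp [h]
  w_nonneg := by intro j; norm_num
  w_total := by simp
  cover := by
    intro v
    exact ⟨0, by norm_num, by simp⟩

/-! Each variable occurs once positively and once negatively, so it has bias `0` and the
oblivious algorithm rounds it by a fair coin; the two clauses are then satisfied with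
probability `2^{-k}` each, for an expected value of `2^{-k}` against an optimum of `1/2`. -/

namespace twoClauseInstance

variable {k : ℕ}

theorem sat_zero_iff (x : Fin k → Bool) :
    (twoClauseInstance k).sat x (0 : Fin 2) ↔ x = fun _ => true := by
  simp [KAndInstance.sat, twoClauseInstance, funext_iff]

theorem sat_one_iff (x : Fin k → Bool) :
    (twoClauseInstance k).sat x (1 : Fin 2) ↔ x = fun _ => false := by
  simp [KAndInstance.sat, twoClauseInstance, funext_iff]

theorem val_eq (x : Fin k → Bool) :
    (twoClauseInstance k).val x =
      ((if x = (fun _ => true) then 1 else 0) + (if x = (fun _ => false) then 1 else 0)) / 2 := by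
  change (∑ j : Fin 2, if (twoClauseInstance k).sat x j then (1 : ℝ) else 0) /
    ∑ _j : Fin 2, (1 : ℝ) = _
  simp only [Fin.sum_univ_two, sat_zero_iff, sat_one_iff]
  norm_num

theorem const_true_ne_const_false (hk : 0 < k) :
    (fun _ : Fin k => true) ≠ fun _ => false :=
  fun h => by simpa using congrFun h ⟨0, hk⟩

theorem val_le (hk : 0 < k) (x : Fin k → Bool) : (twoClauseInstance k).val x ≤ 1 / 2 := by
  have hne := const_true_ne_const_false hk
  rw [val_eq]
  by_cases htrue : x = fun _ => true
  · subst htrue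
    simp [hne]
  · split_ifs <;> norm_num

theorem val_const_true (hk : 0 < k) : (twoClauseInstance k).val (fun _ => true) = 1 / 2 := by
  simp [val_eq, const_true_ne_const_false hk]

theorem optVal_eq (hk : 0 < k) : (twoClauseInstance k).optVal = 1 / 2 :=
  le_antisymm (ciSup_le (val_le hk))
    ((val_const_true hk).symm.le.trans (le_ciSup (Set.finite_range _).bddAbove _))

theorem sum_val : ∑ x, (twoClauseInstance k).val x = 1 := by
  simp only [val_eq, ← Finset.sum_div, Finset.sum_add_distrib, Finset.sum_ite_eq', Finset.mem_univ,
    if_true]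
  norm_num

theorem bias_eq_zero (v : Fin k) : (twoClauseInstance k).bias v = 0 := by
  have hpos : (twoClauseInstance k).wpos v = 1 := by
    change (∑ j : Fin 2, if v ∈ (if j = 0 then Finset.univ else ∅) then (1 : ℝ) else 0) = 1
    rw [Fin.sum_univ_two]
    simp
  have hneg : (twoClauseInstance k).wneg v = 1 := by
    change (∑ j : Fin 2, if v ∈ (if j = 0 then ∅ else Finset.univ) then (1 : ℝ) else 0) = 1
    rw [Fin.sum_univ_two]
    simp
  simp [KAndInstance.bias, hpos, hneg]

end twoClauseInstance

theorem roundProb_zero {ℓ : ℕ} (T : BiasPartition ℓ) (p : ℕ → ℝ) : roundProb T p 0 = 1 / 2 := by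
  simp [roundProb, BiasPartition.classIdx, T.t0_nonneg, pExt]

/-- On an instance with all biases zero every variable is rounded by a fair coin, so the
oblivious algorithm computes the average value over all assignments. -/
theorem oblValue_eq_of_bias_eq_zero {k n ℓ : ℕ} (T : BiasPartition ℓ) (p : ℕ → ℝ)
    (Ψ : KAndInstance k n) (hbias : ∀ v, Ψ.bias v = 0) :
    oblValue T p Ψ = (2 ^ n)⁻¹ * ∑ x, Ψ.val x := by
  have hcoin : ∀ x : Fin n → Bool, ∀ v, (if x v then roundProb T p (Ψ.bias v)
      else 1 - roundProb T p (Ψ.bias v)) = 2⁻¹ := by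
    intro x v
    rw [hbias, roundProb_zero]
    split_ifs <;> norm_num
  simp only [oblValue, hcoin, Finset.prod_const, Finset.card_univ, Fintype.card_fin, inv_pow,
    Finset.mul_sum]

theorem oblRatio_le {k n ℓ : ℕ} (T : BiasPartition ℓ) (p : ℕ → ℝ) (Ψ : KAndInstance k n)
    (hnonneg : 0 ≤ oblValue T p Ψ / Ψ.optVal) :
    oblRatio k ℓ T p ≤ oblValue T p Ψ / Ψ.optVal := by
  by_cases hbdd : BddBelow {r : ℝ | ∃ (n : ℕ) (Ψ : KAndInstance k n), r = oblValue T p Ψ / Ψ.optVal}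
  · exact csInf_le hbdd ⟨n, Ψ, rfl⟩
  · rw [oblRatio, Real.sInf_of_not_bddBelow hbdd]
    exact hnonneg

/-- **Trivial upper bound for oblivious algorithms** (`Observation`): the
two-clause instance has value `1/2`, every one of its variables has bias `0`,
and every oblivious algorithm attains expected value exactly `2^{-k}` on it;
consequently every oblivious algorithm has approximation ratio at most
`2^{-(k-1)}`. -/
theorem oblivious_trivial_upper_bound (k : ℕ) (hk : 2 ≤ k) :
    (twoClauseInstance k).optVal = 1/2 ∧
    (∀ v : Fin k, (twoClauseInstance k).bias v = 0) ∧
    ∀ (ℓ : ℕ) (T : BiasPartition ℓ) (p : ℕ → ℝ),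
      (∀ i, 1 ≤ i → i ≤ ℓ → p i ∈ Set.Icc (0 : ℝ) 1) →
      oblValue T p (twoClauseInstance k) = (2 : ℝ) ^ (-(k : ℤ)) ∧
      oblRatio k ℓ T p ≤ (2 : ℝ) ^ (-((k : ℤ) - 1)) := by
  have hk_pos : 0 < k := by omega
  refine ⟨twoClauseInstance.optVal_eq hk_pos, twoClauseInstance.bias_eq_zero, fun ℓ T p _ => ?_⟩
  have hobl : oblValue T p (twoClauseInstance k) = (2 : ℝ) ^ (-(k : ℤ)) := by
    rw [oblValue_eq_of_bias_eq_zero T p _ twoClauseInstance.bias_eq_zero,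
      twoClauseInstance.sum_val, mul_one, zpow_neg, zpow_natCast]
  have hratio : oblValue T p (twoClauseInstance k) / (twoClauseInstance k).optVal =
      (2 : ℝ) ^ (-((k : ℤ) - 1)) := by
    rw [hobl, twoClauseInstance.optVal_eq hk_pos, neg_sub, sub_eq_neg_add, zpow_add₀ two_ne_zero,
      zpow_one]
    ring
  refine ⟨hobl, ?_⟩
  calc oblRatio k ℓ T p ≤ _ := oblRatio_le T p _ (by rw [hratio]; positivity)
    _ = _ := hratio
end

section
/- Let k ≥ 2 be an integer, 0 ≤ γ, δ ≤ 1, β > 0, and set t = (δ,1) and p = (½(1+γ)). Suppose there exist reals X, Y ≥ 0 such that for all natural numbers i, j with i+j ≤ k: (1+δ)(1−(i+j)/k)·Y + (1−δ)(j/k)·X ≤ β^{−1}(1−γ)^i(1+γ)^j, and 2 − (1−δ)(1−(i+j)/k)·Y − (1+δ)(i/k)·X ≤ β^{−1}(1−γ)^i(1+γ)^j. Then the oblivious algorithm Obl_k^{t,p} has approximation ratio α(Obl_k^{t,p}) ≥ 2^{−(k−1)}·β. -/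
open scoped BigOperators
open Classical

/-!
The oblivious algorithm satisfies a clause with `i` literals opposing and `j` literals following
the bias class of their variable with probability `2^{-k} (1-γ)^i (1+γ)^j`. Fix any assignment
`a`. The constraints on `(X, Y)` bound this probability from below, clause by clause, by
`2^{-k} β` times `2·[a satisfies the clause]` plus a correction that is a sum of one term per
literal. Regrouped by variable instead of by clause, the corrections are nonnegative: a clause
satisfied by `a` contains only literals agreeing with `a`, and the threshold `δ` compares the
positive with the negative occurrences of each variable. Hence `Obl ≥ 2^{-(k-1)} β val(a)`.
-/

open Finset

section SignTypeFibres
variable {ι M : Type*}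

@[to_additive]
theorem Finset.prod_comp_signType [CommMonoid M] (s : Finset ι) (g : ι → SignType)
    (f : SignType → M) :
    ∏ i ∈ s, f (g i) =
      f (-1) ^ #{i ∈ s | g i = -1} * f 0 ^ #{i ∈ s | g i = 0} * f 1 ^ #{i ∈ s | g i = 1} := by
  rw [← prod_fiberwise s g]
  simp only [SignType.univ_eq, prod_insert (by decide : (0 : SignType) ∉ ({-1, 1} : Finset _)),
    prod_insert (by decide : (-1 : SignType) ∉ ({1} : Finset _)), prod_singleton]
  rw [prod_congr rfl fun i hi => congrArg f (mem_filter.mp hi).2, prod_const,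
    prod_congr rfl fun i hi => congrArg f (mem_filter.mp hi).2, prod_const,
    prod_congr rfl fun i hi => congrArg f (mem_filter.mp hi).2, prod_const]
  ac_rfl

theorem Finset.card_eq_card_filter_signType (s : Finset ι) (g : ι → SignType) :
    #s = #{i ∈ s | g i = -1} + #{i ∈ s | g i = 0} + #{i ∈ s | g i = 1} := by
  simpa using sum_comp_signType s g (fun _ => (1 : ℕ))

end SignTypeFibres

theorem Fintype.sum_prod_mul_boole_eq_prod {ι R : Type*} [Fintype ι] [DecidableEq ι]
    [CommSemiring R] (μ : ι → Bool → R) (hμ : ∀ i, μ i true + μ i false = 1) (s : Finset ι)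
    (τ : ι → Bool) :
    ∑ x : ι → Bool, (∏ i, μ i (x i)) * (if ∀ i ∈ s, x i = τ i then 1 else 0) =
      ∏ i ∈ s, μ i (τ i) := by
  set g : ι → Bool → R := fun i b => μ i b * if i ∈ s then (if b = τ i then 1 else 0) else 1
  have hmarginal : ∀ i, ∑ b, g i b = if i ∈ s then μ i (τ i) else 1 := by
    intro i
    by_cases hi : i ∈ s
    · simp [g, hi]
    · simpa [g, hi, add_comm] using hμ i
  calc _ = ∑ x : ι → Bool, ∏ i, g i (x i) := by
        refine Finset.sum_congr rfl fun x _ => ?_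
        rw [prod_mul_distrib, Fintype.prod_ite_mem, Finset.prod_boole]
        split_ifs <;> rfl
    _ = ∏ i, ∑ b, g i b := (Fintype.prod_sum g).symm
    _ = _ := by simp_rw [hmarginal, Fintype.prod_ite_mem]

noncomputable def biasClass (δ b : ℝ) : SignType := if |b| ≤ δ then 0 else SignType.sign b

theorem biasClass_eq_zero_iff {δ b : ℝ} (hδ : 0 ≤ δ) : biasClass δ b = 0 ↔ |b| ≤ δ := by
  unfold biasClass
  split_ifs with h
  · simp [h]
  · simp only [sign_eq_zero_iff, h, iff_false]
    rintro rfl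
    simp [hδ] at h

section BiasRatio
variable {p q δ : ℝ}

theorem abs_sub_div_add_le_one (hp : 0 ≤ p) (hq : 0 ≤ q) : |(p - q) / (p + q)| ≤ 1 := by
  rw [abs_div, abs_of_nonneg (add_nonneg hp hq)]
  exact div_le_one_of_le₀ (abs_sub_le_iff.mpr ⟨by linarith, by linarith⟩) (add_nonneg hp hq)

theorem abs_sub_le_of_biasClass_eq_zero (hp : 0 ≤ p) (hq : 0 ≤ q) (hδ : 0 ≤ δ)
    (h : biasClass δ ((p - q) / (p + q)) = 0) : |p - q| ≤ δ * (p + q) := by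
  rw [biasClass_eq_zero_iff hδ, abs_div] at h
  rcases (add_nonneg hp hq).eq_or_lt with hpq | hpq
  · obtain rfl : p = 0 := by linarith
    obtain rfl : q = 0 := by linarith
    simp
  · rwa [abs_of_pos hpq, div_le_iff₀ hpq] at h

theorem le_biasClass_mul_sub (hp : 0 ≤ p) (hq : 0 ≤ q) (hδ : 0 ≤ δ)
    (h : biasClass δ ((p - q) / (p + q)) ≠ 0) :
    δ * (p + q) ≤ biasClass δ ((p - q) / (p + q)) * (p - q) := by
  have hlarge : δ < |(p - q) / (p + q)| := not_le.mp (mt (biasClass_eq_zero_iff hδ).mpr h)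
  rw [biasClass, if_neg hlarge.not_ge]
  rcases (add_nonneg hp hq).eq_or_lt with hpq | hpq
  · simp [← hpq] at hlarge
    linarith
  · set b := (p - q) / (p + q)
    have hsub : p - q = b * (p + q) := by simp only [b]; field_simp
    calc δ * (p + q) ≤ |b| * (p + q) := mul_le_mul_of_nonneg_right hlarge.le hpq.le
      _ = SignType.sign b * (p - q) := by rw [hsub, ← mul_assoc, sign_mul_self]

end BiasRatio

theorem BiasPartition.sInf_setOf_le_t_eq_one (T : BiasPartition 1) {c : ℝ} (h0 : T.t 0 < c)
    (h1 : c ≤ 1) : sInf {i : ℕ | c ≤ T.t i} = 1 := by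
  have hmem : 1 ∈ {i : ℕ | c ≤ T.t i} := by simpa [T.t_top] using h1
  refine le_antisymm (Nat.sInf_le hmem) (Nat.one_le_iff_ne_zero.mpr fun hzero => ?_)
  have := hzero ▸ Nat.sInf_mem ⟨1, hmem⟩
  exact (not_le.mpr h0) this

theorem roundProb_eq {T : BiasPartition 1} {δ : ℝ} (hT : T.t 0 = δ) (γ : ℝ) {b : ℝ}
    (hb : |b| ≤ 1) : roundProb T (fun _ => (1 + γ) / 2) b = (1 + biasClass δ b * γ) / 2 := by
  subst hT
  unfold roundProb BiasPartition.classIdx biasClass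
  by_cases hsmall : |b| ≤ T.t 0
  · simp [hsmall, pExt]
  have hδ := T.t0_nonneg
  rcases lt_trichotomy b 0 with hneg | rfl | hpos
  · have hlarge : T.t 0 < -b := abs_of_neg hneg ▸ not_le.mp hsmall
    rw [if_neg hsmall, if_neg hneg.not_gt, T.sInf_setOf_le_t_eq_one hlarge (abs_of_neg hneg ▸ hb),
      if_neg hsmall, sign_neg hneg]
    norm_num [pExt]
    ring
  · simp [hδ] at hsmall
  · have hlarge : T.t 0 < b := abs_of_pos hpos ▸ not_le.mp hsmall
    rw [if_neg hsmall, if_pos hpos, T.sInf_setOf_le_t_eq_one hlarge (abs_of_pos hpos ▸ hb),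
      if_neg hsmall, sign_pos hpos]
    norm_num [pExt]

namespace KAndInstance
variable {k n : ℕ} (Ψ : KAndInstance k n)

theorem wpos_nonneg (v : Fin n) : 0 ≤ Ψ.wpos v :=
  sum_nonneg fun j _ => by split_ifs; exacts [Ψ.w_nonneg j, le_rfl]

theorem wneg_nonneg (v : Fin n) : 0 ≤ Ψ.wneg v :=
  sum_nonneg fun j _ => by split_ifs; exacts [Ψ.w_nonneg j, le_rfl]

theorem abs_bias_le_one (v : Fin n) : |Ψ.bias v| ≤ 1 :=
  abs_sub_div_add_le_one (Ψ.wpos_nonneg v) (Ψ.wneg_nonneg v)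

def vars (j : Fin Ψ.m) : Finset (Fin n) := Ψ.pos j ∪ Ψ.neg j

theorem sat_iff {x : Fin n → Bool} {j : Fin Ψ.m} :
    Ψ.sat x j ↔ ∀ v ∈ Ψ.vars j, x v = decide (v ∈ Ψ.pos j) := by
  simp only [sat, vars, mem_union]
  constructor
  · rintro ⟨hpos, hneg⟩ v (hv | hv)
    · simp [hv, hpos v hv]
    · simp [disjoint_right.mp (Ψ.disj j) hv, hneg v hv]
  · intro h
    exact ⟨fun v hv => by simpa [hv] using h v (Or.inl hv),
      fun v hv => by simpa [disjoint_right.mp (Ψ.disj j) hv] using h v (Or.inr hv)⟩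

/-- `1`, `-1` or `0` according as the literal of `v` in clause `j` follows, opposes, or meets
no bias of `v`. -/
noncomputable def literalClass (δ : ℝ) (j : Fin Ψ.m) (v : Fin n) : SignType :=
  if v ∈ Ψ.pos j then biasClass δ (Ψ.bias v) else -biasClass δ (Ψ.bias v)

noncomputable def literalCount (δ : ℝ) (j : Fin Ψ.m) (e : SignType) : ℕ :=
  #{v ∈ Ψ.vars j | Ψ.literalClass δ j v = e}

theorem literalCount_add (δ : ℝ) (j : Fin Ψ.m) :
    Ψ.literalCount δ j (-1) + Ψ.literalCount δ j 0 + Ψ.literalCount δ j 1 = k := by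
  rw [literalCount, literalCount, literalCount, ← card_eq_card_filter_signType]
  exact Ψ.arity j

variable {T : BiasPartition 1} {δ : ℝ}

theorem sum_prob_mul_sat_eq (hT : T.t 0 = δ) (γ : ℝ) (j : Fin Ψ.m) :
    ∑ x : Fin n → Bool,
      (∏ v, if x v then roundProb T (fun _ => (1 + γ) / 2) (Ψ.bias v)
        else 1 - roundProb T (fun _ => (1 + γ) / 2) (Ψ.bias v)) * (if Ψ.sat x j then 1 else 0) =
      (1 / 2) ^ k * (1 - γ) ^ Ψ.literalCount δ j (-1) * (1 + γ) ^ Ψ.literalCount δ j 1 := by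
  set r : Fin n → ℝ := fun v => roundProb T (fun _ => (1 + γ) / 2) (Ψ.bias v)
  simp_rw [Ψ.sat_iff]
  calc _ = ∏ v ∈ Ψ.vars j, if decide (v ∈ Ψ.pos j) then r v else 1 - r v := by
        convert Fintype.sum_prod_mul_boole_eq_prod (fun v b => if b then r v else 1 - r v)
          (fun v => by simp) _ _
    _ = ∏ v ∈ Ψ.vars j, (1 + Ψ.literalClass δ j v * γ) / 2 := by
        refine prod_congr rfl fun v _ => ?_
        by_cases hv : v ∈ Ψ.pos j
        · simp [literalClass, hv, r, roundProb_eq hT γ (Ψ.abs_bias_le_one v)]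
        · simp [literalClass, hv, r, roundProb_eq hT γ (Ψ.abs_bias_le_one v)]
          ring
    _ = _ := by
        have hhalf : (1 / 2 : ℝ) ^ k = (1 / 2) ^ Ψ.literalCount δ j (-1) *
            (1 / 2) ^ Ψ.literalCount δ j 0 * (1 / 2) ^ Ψ.literalCount δ j 1 := by
          rw [← pow_add, ← pow_add, Ψ.literalCount_add]
        rw [prod_comp_signType _ _ fun e : SignType => (1 + e * γ) / 2, hhalf]
        simp only [literalCount, SignType.coe_neg, SignType.coe_one, SignType.coe_zero, neg_one_mul,
          ← sub_eq_add_neg, zero_mul, add_zero, one_mul, div_pow]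
        ring

theorem oblValue_eq (hT : T.t 0 = δ) (γ : ℝ) :
    oblValue T (fun _ => (1 + γ) / 2) Ψ =
      (1 / 2) ^ k * (∑ j, Ψ.w j * ((1 - γ) ^ Ψ.literalCount δ j (-1) *
        (1 + γ) ^ Ψ.literalCount δ j 1)) / ∑ j, Ψ.w j := by
  simp only [oblValue, val, mul_div_assoc', ← sum_div, mul_sum]
  congr 1
  rw [sum_comm]
  refine sum_congr rfl fun j _ => ?_
  rw [show ∀ a b c d : ℝ, a * (b * (c * d)) = b * (a * c * d) by intros; ring,
    ← Ψ.sum_prob_mul_sat_eq hT γ j, mul_sum]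
  refine sum_congr rfl fun x _ => ?_
  split_ifs <;> ring

theorem val_le_optVal (x : Fin n → Bool) : Ψ.val x ≤ Ψ.optVal :=
  le_ciSup (Set.finite_range _).bddAbove x

theorem exists_optVal_eq_val : ∃ a, Ψ.optVal = Ψ.val a := by
  obtain ⟨a, ha⟩ := Finite.exists_max Ψ.val
  exact ⟨a, le_antisymm (ciSup_le ha) (Ψ.val_le_optVal a)⟩

theorem optVal_pos : 0 < Ψ.optVal := by
  obtain ⟨j, -, hj⟩ := exists_lt_of_sum_lt (by simpa using Ψ.w_total : ∑ _j, (0 : ℝ) < ∑ j, Ψ.w j)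
  set x : Fin n → Bool := fun v => decide (v ∈ Ψ.pos j)
  have hsat : Ψ.sat x j := Ψ.sat_iff.mpr fun v _ => rfl
  have hwj : Ψ.w j ≤ ∑ i, if Ψ.sat x i then Ψ.w i else 0 := by
    simpa [hsat] using single_le_sum (f := fun i => if Ψ.sat x i then Ψ.w i else 0)
      (fun i _ => by split_ifs; exacts [Ψ.w_nonneg i, le_rfl]) (mem_univ j)
  calc 0 < Ψ.val x := div_pos (hj.trans_le hwj) Ψ.w_total
    _ ≤ Ψ.optVal := Ψ.val_le_optVal x

noncomputable def allPositive (k : ℕ) : KAndInstance k k where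
  m := 1
  pos _ := univ
  neg _ := ∅
  w _ := 1
  disj _ := disjoint_empty_right _
  arity _ := by simp
  w_nonneg _ := zero_le_one
  w_total := by simp
  cover v := ⟨0, one_pos, Or.inl (mem_univ v)⟩

end KAndInstance

theorem le_oblRatio {k ℓ : ℕ} {T : BiasPartition ℓ} {p : ℕ → ℝ} {c : ℝ}
    (h : ∀ (n : ℕ) (Ψ : KAndInstance k n), c ≤ oblValue T p Ψ / Ψ.optVal) :
    c ≤ oblRatio k ℓ T p := by
  refine le_csInf ⟨_, k, KAndInstance.allPositive k, rfl⟩ ?_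
  rintro _ ⟨n, Ψ, rfl⟩
  exact h n Ψ

/-- The constraints on a dual solution `(X, Y)`, one pair for each clause with `i` literals
opposing and `j` literals following the bias class of their variable. -/
def DualFeasible (k : ℕ) (γ δ β X Y : ℝ) : Prop :=
  ∀ i j : ℕ, i + j ≤ k →
    (1 + δ) * (1 - ((i : ℝ) + j) / k) * Y + (1 - δ) * ((j : ℝ) / k) * X ≤
        β⁻¹ * (1 - γ) ^ i * (1 + γ) ^ j ∧
      2 - (1 - δ) * (1 - ((i : ℝ) + j) / k) * Y - (1 + δ) * ((i : ℝ) / k) * X ≤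
        β⁻¹ * (1 - γ) ^ i * (1 + γ) ^ j

/-- The share of the dual objective carried by a literal of class `e` in a clause that the
comparison assignment satisfies (`s`) or not. -/
noncomputable def dualTerm (δ X Y : ℝ) (s : Prop) (e : SignType) : ℝ :=
  if s then -((1 - δ) * Y * (if e = 0 then 1 else 0) + (1 + δ) * X * (if e = -1 then 1 else 0))
  else (1 + δ) * Y * (if e = 0 then 1 else 0) + (1 - δ) * X * (if e = 1 then 1 else 0)

section DualTerm
variable {δ X Y : ℝ}

theorem dualTerm_anti (hδ0 : 0 ≤ δ) (hδ1 : δ ≤ 1) (hX : 0 ≤ X) (hY : 0 ≤ Y) {s t : Prop}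
    (hst : s → t) (e : SignType) : dualTerm δ X Y t e ≤ dualTerm δ X Y s e := by
  unfold dualTerm
  by_cases hs : s
  · simp [hs, hst hs]
  by_cases ht : t
  · simp only [hs, ht, if_true, if_false]
    have : 0 ≤ (1 - δ) * Y * (if e = 0 then 1 else 0) + (1 + δ) * X * (if e = -1 then 1 else 0) +
        ((1 + δ) * Y * (if e = 0 then 1 else 0) + (1 - δ) * X * (if e = 1 then 1 else 0)) := by
      have : (0 : ℝ) ≤ 1 - δ := by linarith
      positivity
    linarith
  · simp [hs, ht]

theorem sum_dualTerm_comp {ι : Type*} (s : Prop) (S : Finset ι) (g : ι → SignType) :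
    ∑ i ∈ S, dualTerm δ X Y s (g i) =
      if s then -((1 - δ) * Y * #{i ∈ S | g i = 0} + (1 + δ) * X * #{i ∈ S | g i = -1})
      else (1 + δ) * Y * #{i ∈ S | g i = 0} + (1 - δ) * X * #{i ∈ S | g i = 1} := by
  rw [sum_comp_signType]
  by_cases hs : s <;> simp [dualTerm, hs] <;> ring

theorem dualTerm_occurrences_nonneg {p q : ℝ} (hp : 0 ≤ p) (hq : 0 ≤ q) (hδ0 : 0 ≤ δ)
    (hX : 0 ≤ X) (hY : 0 ≤ Y) (s : Prop) :
    0 ≤ p * dualTerm δ X Y s (biasClass δ ((p - q) / (p + q))) +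
      q * dualTerm δ X Y (¬s) (-biasClass δ ((p - q) / (p + q))) := by
  have hzero := abs_sub_le_of_biasClass_eq_zero hp hq hδ0
  have hlarge := le_biasClass_mul_sub hp hq hδ0
  generalize biasClass δ ((p - q) / (p + q)) = c at hzero hlarge ⊢
  cases c with
  | zero =>
    obtain ⟨h₁, h₂⟩ := abs_le.mp (hzero rfl)
    by_cases hs : s <;> simp [dualTerm, hs] <;> nlinarith
  | neg =>
    have h := hlarge (by decide)
    by_cases hs : s <;> simp [dualTerm, hs] at h ⊢
    nlinarith
  | pos =>
    have h := hlarge (by decide)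
    by_cases hs : s <;> simp [dualTerm, hs] at h ⊢
    nlinarith

end DualTerm

theorem DualFeasible.clause_bound {k : ℕ} {γ δ β X Y : ℝ} (hD : DualFeasible k γ δ β X Y)
    (hk : k ≠ 0) (hβ : 0 < β) (s : Prop) {i z j : ℕ} (hsum : i + z + j = k) :
    β * (if s then 2 else 0) + β / k *
        (if s then -((1 - δ) * Y * z + (1 + δ) * X * i) else (1 + δ) * Y * z + (1 - δ) * X * j) ≤
      (1 - γ) ^ i * (1 + γ) ^ j := by
  obtain ⟨h₁, h₂⟩ := hD i j (by omega)
  have hk' : (k : ℝ) ≠ 0 := Nat.cast_ne_zero.mpr hk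
  have hz : 1 - ((i : ℝ) + j) / k = z / k := by
    have hkR : (k : ℝ) = i + z + j := by exact_mod_cast hsum.symm
    field_simp
    linarith
  have hscale : ∀ {L : ℝ}, L ≤ β⁻¹ * (1 - γ) ^ i * (1 + γ) ^ j →
      β * L ≤ (1 - γ) ^ i * (1 + γ) ^ j := by
    intro L hL
    calc β * L ≤ β * (β⁻¹ * (1 - γ) ^ i * (1 + γ) ^ j) := mul_le_mul_of_nonneg_left hL hβ.le
      _ = _ := by field_simp
  rw [hz] at h₁ h₂
  split_ifs
  · convert hscale h₂ using 1
    field_simp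
    ring
  · convert hscale h₁ using 1
    field_simp
    ring

namespace KAndInstance
variable {k n : ℕ} (Ψ : KAndInstance k n) {γ δ β X Y : ℝ}

theorem mem_pos_iff_of_sat {a : Fin n → Bool} {j : Fin Ψ.m} (hs : Ψ.sat a j) {v : Fin n}
    (hv : v ∈ Ψ.vars j) : v ∈ Ψ.pos j ↔ a v = true := by
  rw [Ψ.sat_iff.mp hs v hv, decide_eq_true_iff]

theorem sum_w_mul_dualTerm_eq (a : Fin n → Bool) (v : Fin n) :
    ∑ j, Ψ.w j * (if v ∈ Ψ.vars j then
        dualTerm δ X Y (v ∈ Ψ.pos j ↔ a v = true) (Ψ.literalClass δ j v) else 0) =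
      Ψ.wpos v * dualTerm δ X Y (a v = true) (biasClass δ (Ψ.bias v)) +
        Ψ.wneg v * dualTerm δ X Y (¬a v = true) (-biasClass δ (Ψ.bias v)) := by
  simp only [wpos, wneg, sum_mul, ← sum_add_distrib]
  refine sum_congr rfl fun j _ => ?_
  by_cases hpos : v ∈ Ψ.pos j
  · have hneg : v ∉ Ψ.neg j := disjoint_left.mp (Ψ.disj j) hpos
    simp [vars, literalClass, hpos, hneg]
  · by_cases hneg : v ∈ Ψ.neg j <;> simp [vars, literalClass, hpos, hneg]

theorem sum_w_mul_sum_dualTerm_nonneg (hδ0 : 0 ≤ δ) (hδ1 : δ ≤ 1) (hX : 0 ≤ X) (hY : 0 ≤ Y)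
    (a : Fin n → Bool) :
    0 ≤ ∑ j, Ψ.w j * ∑ v ∈ Ψ.vars j, dualTerm δ X Y (Ψ.sat a j) (Ψ.literalClass δ j v) := by
  calc 0 ≤ ∑ v, (Ψ.wpos v * dualTerm δ X Y (a v = true) (biasClass δ (Ψ.bias v)) +
        Ψ.wneg v * dualTerm δ X Y (¬a v = true) (-biasClass δ (Ψ.bias v))) :=
        sum_nonneg fun v _ => dualTerm_occurrences_nonneg (Ψ.wpos_nonneg v) (Ψ.wneg_nonneg v)
          hδ0 hX hY _
    _ = ∑ v, ∑ j, Ψ.w j * (if v ∈ Ψ.vars j then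
          dualTerm δ X Y (v ∈ Ψ.pos j ↔ a v = true) (Ψ.literalClass δ j v) else 0) := by
        simp only [Ψ.sum_w_mul_dualTerm_eq]
    _ ≤ ∑ v, ∑ j, Ψ.w j * (if v ∈ Ψ.vars j then
          dualTerm δ X Y (Ψ.sat a j) (Ψ.literalClass δ j v) else 0) := by
        refine sum_le_sum fun v _ => sum_le_sum fun j _ =>
          mul_le_mul_of_nonneg_left ?_ (Ψ.w_nonneg j)
        split_ifs with hv
        · exact dualTerm_anti hδ0 hδ1 hX hY (fun hs => Ψ.mem_pos_iff_of_sat hs hv) _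
        · exact le_rfl
    _ = _ := by
        rw [sum_comm]
        simp only [← mul_sum, Fintype.sum_ite_mem]

theorem two_mul_sum_sat_le (hD : DualFeasible k γ δ β X Y) (hk : k ≠ 0) (hβ : 0 < β)
    (hδ0 : 0 ≤ δ) (hδ1 : δ ≤ 1) (hX : 0 ≤ X) (hY : 0 ≤ Y) (a : Fin n → Bool) :
    2 * β * ∑ j, (if Ψ.sat a j then Ψ.w j else 0) ≤
      ∑ j, Ψ.w j * ((1 - γ) ^ Ψ.literalCount δ j (-1) * (1 + γ) ^ Ψ.literalCount δ j 1) := by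
  have hdual := Ψ.sum_w_mul_sum_dualTerm_nonneg hδ0 hδ1 hX hY a
  calc 2 * β * ∑ j, (if Ψ.sat a j then Ψ.w j else 0)
      ≤ 2 * β * ∑ j, (if Ψ.sat a j then Ψ.w j else 0) + β / k *
          ∑ j, Ψ.w j * ∑ v ∈ Ψ.vars j, dualTerm δ X Y (Ψ.sat a j) (Ψ.literalClass δ j v) :=
        le_add_of_nonneg_right (mul_nonneg (by positivity) hdual)
    _ = ∑ j, Ψ.w j * (β * (if Ψ.sat a j then 2 else 0) + β / k *
          ∑ v ∈ Ψ.vars j, dualTerm δ X Y (Ψ.sat a j) (Ψ.literalClass δ j v)) := by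
        rw [mul_sum, mul_sum, ← sum_add_distrib]
        refine sum_congr rfl fun j _ => ?_
        split_ifs <;> ring
    _ ≤ _ := by
        refine sum_le_sum fun j _ => mul_le_mul_of_nonneg_left ?_ (Ψ.w_nonneg j)
        rw [sum_dualTerm_comp]
        exact hD.clause_bound hk hβ _ (Ψ.literalCount_add δ j)

theorem zpow_mul_val_le_oblValue (hD : DualFeasible k γ δ β X Y) (hk : k ≠ 0) (hβ : 0 < β)
    (hδ0 : 0 ≤ δ) (hδ1 : δ ≤ 1) (hX : 0 ≤ X) (hY : 0 ≤ Y) {T : BiasPartition 1}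
    (hT : T.t 0 = δ) (a : Fin n → Bool) :
    (2 : ℝ) ^ (-((k : ℤ) - 1)) * β * Ψ.val a ≤ oblValue T (fun _ => (1 + γ) / 2) Ψ := by
  rw [Ψ.oblValue_eq hT γ, val, mul_div_assoc']
  refine div_le_div_of_nonneg_right ?_ Ψ.w_total.le
  have htwo : (2 : ℝ) ^ (-((k : ℤ) - 1)) = 2 / 2 ^ k := by
    rw [neg_sub, zpow_sub₀ two_ne_zero, zpow_one, zpow_natCast]
  calc (2 : ℝ) ^ (-((k : ℤ) - 1)) * β * ∑ j, (if Ψ.sat a j then Ψ.w j else 0)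
      = (1 / 2) ^ k * (2 * β * ∑ j, (if Ψ.sat a j then Ψ.w j else 0)) := by
        rw [htwo, one_div_pow]
        field_simp
    _ ≤ _ := mul_le_mul_of_nonneg_left (Ψ.two_mul_sum_sat_le hD hk hβ hδ0 hδ1 hX hY a)
        (by positivity)

end KAndInstance

theorem sufficient_condition_general (k : ℕ) (hk : 2 ≤ k) (γ δ β : ℝ)
    (hδ : δ ∈ Set.Icc (0 : ℝ) 1) (hβ : 0 < β)
    (X Y : ℝ) (hX : 0 ≤ X) (hY : 0 ≤ Y)
    (h1 : ∀ i j : ℕ, i + j ≤ k →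
      (1 + δ) * (1 - ((i : ℝ) + j) / k) * Y + (1 - δ) * ((j : ℝ) / k) * X ≤
        β⁻¹ * (1 - γ) ^ i * (1 + γ) ^ j)
    (h2 : ∀ i j : ℕ, i + j ≤ k →
      2 - (1 - δ) * (1 - ((i : ℝ) + j) / k) * Y - (1 + δ) * ((i : ℝ) / k) * X ≤
        β⁻¹ * (1 - γ) ^ i * (1 + γ) ^ j)
    (T : BiasPartition 1) (hT : T.t 0 = δ) :
    (2 : ℝ) ^ (-((k : ℤ) - 1)) * β ≤ oblRatio k 1 T (fun _ => (1 + γ) / 2) := by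
  have hD : DualFeasible k γ δ β X Y := fun i j hij => ⟨h1 i j hij, h2 i j hij⟩
  refine le_oblRatio fun n Ψ => ?_
  obtain ⟨a, ha⟩ := Ψ.exists_optVal_eq_val
  rw [le_div_iff₀ Ψ.optVal_pos, ha]
  exact Ψ.zpow_mul_val_le_oblValue hD (by omega) hβ hδ.1 hδ.2 hX hY hT a

/-- **Sufficient condition for good approximations** (dual construction): let
`k ≥ 2`, `0 ≤ γ, δ ≤ 1`, `β > 0`, and consider the oblivious algorithm with
bias partition `t = (δ, 1)` and rounding vector `p = (½(1+γ))`.  If there exist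
`X, Y ≥ 0` such that for all naturals `i, j` with `i + j ≤ k`
`(1+δ)(1-(i+j)/k)Y + (1-δ)(j/k)X ≤ β⁻¹(1-γ)^i(1+γ)^j` and
`2 - (1-δ)(1-(i+j)/k)Y - (1+δ)(i/k)X ≤ β⁻¹(1-γ)^i(1+γ)^j`,
then `α(Obl_k^{t,p}) ≥ 2^{-(k-1)}·β`. -/
theorem sufficient_condition (k : ℕ) (hk : 2 ≤ k) (γ δ β : ℝ)
    (hγ : γ ∈ Set.Icc (0 : ℝ) 1) (hδ : δ ∈ Set.Icc (0 : ℝ) 1) (hβ : 0 < β)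
    (X Y : ℝ) (hX : 0 ≤ X) (hY : 0 ≤ Y)
    (h1 : ∀ i j : ℕ, i + j ≤ k →
      (1 + δ) * (1 - ((i : ℝ) + j) / k) * Y + (1 - δ) * ((j : ℝ) / k) * X ≤
        β⁻¹ * (1 - γ) ^ i * (1 + γ) ^ j)
    (h2 : ∀ i j : ℕ, i + j ≤ k →
      2 - (1 - δ) * (1 - ((i : ℝ) + j) / k) * Y - (1 + δ) * ((i : ℝ) / k) * X ≤
        β⁻¹ * (1 - γ) ^ i * (1 + γ) ^ j)
    (T : BiasPartition 1) (hT : T.t 0 = δ) :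
    (2 : ℝ) ^ (-((k : ℤ) - 1)) * β ≤ oblRatio k 1 T (fun _ => (1 + γ) / 2) :=
  sufficient_condition_general k hk γ δ β hδ hβ X Y hX hY h1 h2 T hT
end

section
/- Let k ≥ 2 be an even integer and let i, j be natural numbers with i + j ≤ k. Then 1 + (j−i)/k ≤ (1 − 1/(k+1))^{i − k/2} · (1 + 1/(k+1))^{j − k/2}, where the exponents i − k/2 and j − k/2 are integers (possibly negative). Moreover, equality holds if and only if (i,j) ∈ {(k/2, k/2), (k/2 − 1, k/2), (k/2 − 1, k/2 + 1)}. -/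
/-!
With `y = 1/k`, `q = j - k/2` and `s = k - (i + j) ≥ 0`, the right-hand side is
`(1 + 2y)^q (1 + y)^s` and the left-hand side is `1 + (2q + s) y`. For `s = 0` this is Bernoulli's
inequality for integer exponents; for `s = 1` it follows by writing `1 + y` as the mean of `1` and
`1 + 2y`. Passing from `s` to `s + 2` trades a factor `1 + 2y` of `(1 + 2y)^(q+1) (1 + y)^s` for
the strictly larger `(1 + y)^2`, so there is no equality case with `s ≥ 2`.
-/

theorem one_add_mul_lt_zpow {t : ℝ} (ht : -1 < t) (ht0 : t ≠ 0) {n : ℤ} (hn0 : n ≠ 0)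
    (hn1 : n ≠ 1) : 1 + n * t < (1 + t) ^ n := by
  obtain ⟨m, rfl | rfl⟩ := n.eq_nat_or_neg
  · have hm : 1 < (m : ℝ) := by norm_cast; omega
    simpa [Real.rpow_natCast] using one_add_mul_self_lt_rpow_one_add ht.le ht0 hm
  · have hm : (1 : ℝ) ≤ m := by norm_cast; omega
    have ht1 : 0 < 1 + t := by linarith
    have hinv : 1 - t < (1 + t)⁻¹ := by
      rw [← one_div, lt_div_iff₀ ht1]
      nlinarith [sq_pos_of_ne_zero ht0]
    calc 1 + ((-m : ℤ) : ℝ) * t < 1 + m * ((1 + t)⁻¹ - 1) := by push_cast; nlinarith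
      _ ≤ (1 + ((1 + t)⁻¹ - 1)) ^ m := one_add_mul_le_pow (by linarith [inv_pos.2 ht1]) m
      _ = (1 + t) ^ (-m : ℤ) := by simp [zpow_neg]

theorem one_add_mul_le_zpow {t : ℝ} (ht : -1 < t) (n : ℤ) : 1 + n * t ≤ (1 + t) ^ n := by
  rcases eq_or_ne t 0 with rfl | ht0
  · simp
  rcases eq_or_ne n 0 with rfl | hn0
  · simp
  rcases eq_or_ne n 1 with rfl | hn1
  · simp
  exact (one_add_mul_lt_zpow ht ht0 hn0 hn1).le

theorem one_add_mul_lt_zpow_mul_one_add {y : ℝ} (hy : -1 < 2 * y) (hy0 : y ≠ 0) {q : ℤ}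
    (hq : q ≠ 0) : 1 + (2 * q + 1) * y < (1 + 2 * y) ^ q * (1 + y) := by
  have hmean : (1 + 2 * y) ^ q * (1 + y) = ((1 + 2 * y) ^ q + (1 + 2 * y) ^ (q + 1)) / 2 := by
    rw [zpow_add_one₀ (by linarith)]; ring
  have hy2 : 2 * y ≠ 0 := by positivity
  rw [hmean]
  rcases eq_or_ne q (-1) with rfl | hq1
  · have := one_add_mul_lt_zpow hy hy2 (n := -1) (by norm_num) (by norm_num)
    norm_num at *; linarith
  · have := one_add_mul_le_zpow hy q
    have := one_add_mul_lt_zpow hy hy2 (n := q + 1) (by omega) (by omega)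
    push_cast at *; linarith

theorem zpow_mul_pow_eq_one_add_mul {y : ℝ} {q : ℤ} {s : ℕ}
    (h : s = 0 ∧ (q = 0 ∨ q = 1) ∨ s = 1 ∧ q = 0) :
    (1 + 2 * y) ^ q * (1 + y) ^ s = 1 + (2 * q + s) * y := by
  obtain ⟨rfl, rfl | rfl⟩ | ⟨rfl, rfl⟩ := h <;> simp

theorem one_add_mul_lt_zpow_mul_pow {y : ℝ} (hy : -1 < 2 * y) (hy0 : y ≠ 0) :
    ∀ (q : ℤ) (s : ℕ), ¬(s = 0 ∧ (q = 0 ∨ q = 1) ∨ s = 1 ∧ q = 0) →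
      1 + (2 * q + s) * y < (1 + 2 * y) ^ q * (1 + y) ^ s
  | q, 0, h => by
    have := one_add_mul_lt_zpow hy (by positivity) (n := q) (by tauto) (by tauto)
    simp only [CharP.cast_eq_zero, add_zero, pow_zero, mul_one]
    linarith
  | q, 1, h => by simpa using one_add_mul_lt_zpow_mul_one_add hy hy0 (q := q) (by tauto)
  | q, s + 2, _ => by
    have hle : 1 + (2 * (q + 1 : ℤ) + s) * y ≤ (1 + 2 * y) ^ (q + 1) * (1 + y) ^ s := by
      by_cases h : s = 0 ∧ (q + 1 = 0 ∨ q + 1 = 1) ∨ s = 1 ∧ q + 1 = 0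
      · exact (zpow_mul_pow_eq_one_add_mul h).ge
      · exact (one_add_mul_lt_zpow_mul_pow hy hy0 (q + 1) s h).le
    have hpos : 0 < (1 + 2 * y) ^ q * (1 + y) ^ s := by
      have : 0 < 1 + y := by linarith
      have : 0 < 1 + 2 * y := by linarith
      positivity
    calc 1 + (2 * q + (s + 2 : ℕ)) * y = 1 + (2 * (q + 1 : ℤ) + s) * y := by push_cast; ring
      _ ≤ (1 + 2 * y) ^ (q + 1) * (1 + y) ^ s := hle
      _ < (1 + 2 * y) ^ q * (1 + y) ^ (s + 2) := by
        rw [zpow_add_one₀ (by linarith), pow_add]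
        nlinarith [mul_pos hpos (sq_pos_of_ne_zero hy0)]

theorem one_add_mul_le_zpow_mul_pow {y : ℝ} (hy : -1 < 2 * y) (q : ℤ) (s : ℕ) :
    1 + (2 * q + s) * y ≤ (1 + 2 * y) ^ q * (1 + y) ^ s := by
  rcases eq_or_ne y 0 with rfl | hy0
  · simp
  by_cases h : s = 0 ∧ (q = 0 ∨ q = 1) ∨ s = 1 ∧ q = 0
  · exact (zpow_mul_pow_eq_one_add_mul h).ge
  · exact (one_add_mul_lt_zpow_mul_pow hy hy0 q s h).le

theorem one_add_mul_eq_zpow_mul_pow_iff {y : ℝ} (hy : -1 < 2 * y) (hy0 : y ≠ 0) (q : ℤ)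
    (s : ℕ) : 1 + (2 * q + s) * y = (1 + 2 * y) ^ q * (1 + y) ^ s ↔
      s = 0 ∧ (q = 0 ∨ q = 1) ∨ s = 1 ∧ q = 0 := by
  refine ⟨fun heq => ?_, fun h => (zpow_mul_pow_eq_one_add_mul h).symm⟩
  by_contra h
  exact (one_add_mul_lt_zpow_mul_pow hy hy0 q s h).ne heq

theorem one_sub_inv_zpow_mul_one_add_inv_zpow {x : ℝ} (hx : x ≠ 0) (hx1 : x + 1 ≠ 0) (p q : ℤ) :
    (1 - 1 / (x + 1)) ^ p * (1 + 1 / (x + 1)) ^ q =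
      (1 + 2 * x⁻¹) ^ q * (1 + x⁻¹) ^ (-(p + q)) := by
  have hu : 1 + x⁻¹ ≠ 0 := by
    rw [show 1 + x⁻¹ = (x + 1) / x by field_simp]
    exact div_ne_zero hx1 hx
  have ha : 1 - 1 / (x + 1) = (1 + x⁻¹)⁻¹ := by field_simp; ring
  have hb : 1 + 1 / (x + 1) = (1 + 2 * x⁻¹) * (1 + x⁻¹)⁻¹ := by field_simp; ring
  rw [ha, hb, mul_zpow, inv_zpow', inv_zpow', neg_add, zpow_add₀ hu]
  ring

/-- **"Two-sided Bernoulli inequality", even case.**  For even `k ≥ 2` and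
naturals `i, j` with `i + j ≤ k`,
`1 + (j-i)/k ≤ (1 - 1/(k+1))^(i - k/2) · (1 + 1/(k+1))^(j - k/2)` (integer
exponents, possibly negative), with equality if and only if
`(i,j) ∈ {(k/2, k/2), (k/2 - 1, k/2), (k/2 - 1, k/2 + 1)}`. -/
theorem two_sided_bernoulli_even (k : ℕ) (hk : 2 ≤ k) (hke : Even k)
    (i j : ℕ) (hij : i + j ≤ k) :
    1 + ((j : ℝ) - (i : ℝ)) / k ≤
      (1 - 1 / ((k : ℝ) + 1)) ^ ((i : ℤ) - (k : ℤ) / 2) *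
        (1 + 1 / ((k : ℝ) + 1)) ^ ((j : ℤ) - (k : ℤ) / 2) ∧
    (1 + ((j : ℝ) - (i : ℝ)) / k =
        (1 - 1 / ((k : ℝ) + 1)) ^ ((i : ℤ) - (k : ℤ) / 2) *
          (1 + 1 / ((k : ℝ) + 1)) ^ ((j : ℤ) - (k : ℤ) / 2) ↔
      ((i = k / 2 ∧ j = k / 2) ∨ (i = k / 2 - 1 ∧ j = k / 2) ∨
        (i = k / 2 - 1 ∧ j = k / 2 + 1))) := by
  obtain ⟨m, hm⟩ := hke
  have hk0 : (0 : ℝ) < k := by exact_mod_cast (by omega : 0 < k)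
  have hrhs := one_sub_inv_zpow_mul_one_add_inv_zpow hk0.ne' (by positivity)
    ((i : ℤ) - (k : ℤ) / 2) ((j : ℤ) - (k : ℤ) / 2)
  have hslack : -(((i : ℤ) - (k : ℤ) / 2) + ((j : ℤ) - (k : ℤ) / 2)) = ((k - (i + j) : ℕ) : ℤ) := by
    omega
  have hlhs : 1 + ((j : ℝ) - (i : ℝ)) / k =
      1 + (2 * (((j : ℤ) - (k : ℤ) / 2 : ℤ) : ℝ) + (k - (i + j) : ℕ)) * (k : ℝ)⁻¹ := by
    rw [show (k : ℤ) / 2 = m by omega, Nat.cast_sub hij, hm]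
    push_cast
    ring
  rw [hrhs, hslack, zpow_natCast, hlhs]
  have hy : -1 < 2 * (k : ℝ)⁻¹ := by linarith [inv_pos.2 hk0]
  refine ⟨one_add_mul_le_zpow_mul_pow hy _ _,
    (one_add_mul_eq_zpow_mul_pow_iff hy (inv_ne_zero hk0.ne') _ _).trans ?_⟩
  omega
end

section
/- Let k ≥ 3 be an odd integer and let i, j be natural numbers with i + j ≤ k. Then 1 + (j−i)/k ≤ (1 − 1/k)^{i − (k−1)/2} · (1 + 1/k)^{j − (k−1)/2}, where the exponents i − (k−1)/2 and j − (k−1)/2 are integers (possibly negative). Moreover, equality holds if and only if (i,j) ∈ {((k−1)/2, (k−1)/2), ((k−1)/2, (k+1)/2), ((k+1)/2, (k−1)/2)}. -/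
/-!
Put `x = 1/k`, `p = i - (k-1)/2` and `q = j - (k-1)/2`; the claim becomes
`1 + (q - p) x ≤ (1 - x)^p (1 + x)^q` for integers with `p + q ≤ 1`.
Raising `p` and `q` by one keeps the left side and multiplies the right side by `1 - x² < 1`,
so it suffices to treat `p + q = 1` and `p + q = 0`. There the right side is
`(1 + x) r^p`, resp. `r^p = (1/r)^(-p)`, with `r = (1 - x)/(1 + x)`, and Bernoulli's inequality
`1 + n (a - 1) ≤ a^n`, valid for all integers `n` and strict unless `n ∈ {0, 1}` or `a = 1`,
gives the claim together with the equality cases.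
-/

section

variable {K : Type*} [Field K] [LinearOrder K] [IsStrictOrderedRing K] {a b x : K} {p q : ℤ}

theorem one_add_mul_sub_lt_zpow (ha : 0 < a) (ha₁ : a ≠ 1) {n : ℤ} (hn₀ : n ≠ 0)
    (hn₁ : n ≠ 1) : 1 + n * (a - 1) < a ^ n := by
  have hsq : 0 < (a - 1) ^ 2 := by have := sub_ne_zero.mpr ha₁; positivity
  obtain ⟨m, rfl | rfl⟩ := Int.eq_nat_or_neg n
  · obtain ⟨l, rfl⟩ : ∃ l, m = l + 2 := ⟨m - 2, by omega⟩
    have h := one_add_mul_sub_le_pow (by linarith : (-1 : K) ≤ a) (l + 1)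
    calc 1 + ((l + 2 : ℕ) : ℤ) * (a - 1) < (1 + (l + 1 : ℕ) * (a - 1)) * a := by
          push_cast; nlinarith
      _ ≤ a ^ (l + 1) * a := by gcongr
      _ = a ^ ((l + 2 : ℕ) : ℤ) := by rw [zpow_natCast]; ring
  · have hm : 0 < (m : K) := by exact_mod_cast (by omega : 0 < m)
    have h := one_add_mul_sub_le_pow (by linarith [inv_pos.mpr ha] : (-1 : K) ≤ a⁻¹) m
    calc 1 + ((-m : ℤ) : K) * (a - 1) < 1 + m * (a⁻¹ - 1) := by
          have hgap : 0 < (m : K) * (a - 1) ^ 2 / a := by positivity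
          have hid : (m : K) * (a⁻¹ - 1) = -m * (a - 1) + m * (a - 1) ^ 2 / a := by
            field_simp; ring
          push_cast; linarith
      _ ≤ a⁻¹ ^ m := h
      _ = a ^ (-(m : ℤ)) := by rw [zpow_neg, zpow_natCast, inv_pow]

theorem one_add_mul_sub_le_zpow (ha : 0 < a) (n : ℤ) : 1 + n * (a - 1) ≤ a ^ n := by
  rcases eq_or_ne a 1 with rfl | ha₁
  · simp
  rcases eq_or_ne n 0 with rfl | hn₀
  · simp
  rcases eq_or_ne n 1 with rfl | hn₁
  · simp
  exact (one_add_mul_sub_lt_zpow ha ha₁ hn₀ hn₁).le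

theorem zpow_add_mul_zpow_add_le (ha : 0 < a) (hb : 0 < b) (hab : a * b ≤ 1) {u : ℕ} :
    a ^ (p + u) * b ^ (q + u) ≤ a ^ p * b ^ q := by
  rw [zpow_add₀ ha.ne', zpow_add₀ hb.ne', zpow_natCast, zpow_natCast,
    mul_mul_mul_comm, ← mul_pow]
  exact mul_le_of_le_one_right (by positivity) (pow_le_one₀ (by positivity) hab)

theorem zpow_add_one_mul_zpow_add_one_lt (ha : 0 < a) (hb : 0 < b) (hab : a * b < 1) :
    a ^ (p + 1) * b ^ (q + 1) < a ^ p * b ^ q := by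
  rw [zpow_add_one₀ ha.ne', zpow_add_one₀ hb.ne', mul_mul_mul_comm]
  exact mul_lt_of_lt_one_right (by positivity) hab

theorem one_add_sub_mul_lt_zpow_mul_zpow_of_add_eq_one (hx₀ : -1 < x) (hx₁ : x < 1)
    (hx : x ≠ 0) (hpq : p + q = 1) (hp : p ≠ 0) (hq : q ≠ 0) :
    1 + ((q : K) - p) * x < (1 - x) ^ p * (1 + x) ^ q := by
  have ha : 0 < 1 - x := by linarith
  have hb : 0 < 1 + x := by linarith
  obtain rfl : q = 1 - p := by omega
  have hr : (1 - x) / (1 + x) ≠ 1 := by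
    rw [ne_eq, div_eq_one_iff_eq hb.ne']
    contrapose! hx
    linarith
  have key := one_add_mul_sub_lt_zpow (div_pos ha hb) hr hp (by omega)
  calc 1 + (((1 - p : ℤ) : K) - p) * x = (1 + x) * (1 + p * ((1 - x) / (1 + x) - 1)) := by
        push_cast; field_simp; ring
    _ < (1 + x) * ((1 - x) / (1 + x)) ^ p := by gcongr
    _ = (1 - x) ^ p * (1 + x) ^ (1 - p) := by
        rw [div_zpow, zpow_sub₀ hb.ne', zpow_one]; field_simp

theorem one_add_sub_mul_le_zpow_mul_zpow_of_add_eq_one (hx₀ : -1 < x) (hx₁ : x < 1)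
    (hpq : p + q = 1) : 1 + ((q : K) - p) * x ≤ (1 - x) ^ p * (1 + x) ^ q := by
  rcases eq_or_ne x 0 with rfl | hx
  · simp
  rcases eq_or_ne p 0 with rfl | hp
  · obtain rfl : q = 1 := by omega
    simp
  rcases eq_or_ne q 0 with rfl | hq
  · obtain rfl : p = 1 := by omega
    simp
  exact (one_add_sub_mul_lt_zpow_mul_zpow_of_add_eq_one hx₀ hx₁ hx hpq hp hq).le

theorem one_add_sub_mul_lt_zpow_mul_zpow_of_add_eq_zero (hx₀ : 0 < x) (hx₁ : x < 1)
    (hpq : p + q = 0) (hp : p ≠ 0) : 1 + ((q : K) - p) * x < (1 - x) ^ p * (1 + x) ^ q := by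
  have ha : 0 < 1 - x := by linarith
  have hb : 0 < 1 + x := by linarith
  obtain rfl : q = -p := by omega
  rcases hp.lt_or_gt with hneg | hpos
  · have hp' : 0 < -(p : K) := by exact_mod_cast Int.neg_pos.mpr hneg
    have hgap : 0 < -(p : K) * x ^ 2 / (1 - x) := by positivity
    have hid : ((-p : ℤ) : K) * ((1 + x) / (1 - x) - 1) =
        -2 * p * x + 2 * (-p * x ^ 2 / (1 - x)) := by
      push_cast; field_simp; ring
    calc 1 + (((-p : ℤ) : K) - p) * x < 1 + ((-p : ℤ) : K) * ((1 + x) / (1 - x) - 1) := by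
          push_cast at hid ⊢; linarith
      _ ≤ ((1 + x) / (1 - x)) ^ (-p) := one_add_mul_sub_le_zpow (div_pos hb ha) (-p)
      _ = (1 - x) ^ p * (1 + x) ^ (-p) := by rw [div_zpow, zpow_neg, zpow_neg]; field_simp
  · have hp' : 0 < (p : K) := by exact_mod_cast hpos
    have hgap : 0 < (p : K) * x ^ 2 / (1 + x) := by positivity
    have hid : (p : K) * ((1 - x) / (1 + x) - 1) = -2 * p * x + 2 * (p * x ^ 2 / (1 + x)) := by
      field_simp; ring
    calc 1 + (((-p : ℤ) : K) - p) * x < 1 + p * ((1 - x) / (1 + x) - 1) := by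
          push_cast; linarith
      _ ≤ ((1 - x) / (1 + x)) ^ p := one_add_mul_sub_le_zpow (div_pos ha hb) p
      _ = (1 - x) ^ p * (1 + x) ^ (-p) := by rw [div_zpow, zpow_neg, div_eq_mul_inv]

theorem one_add_sub_mul_le_zpow_mul_zpow_of_add_eq_zero (hx₀ : 0 < x) (hx₁ : x < 1)
    (hpq : p + q = 0) : 1 + ((q : K) - p) * x ≤ (1 - x) ^ p * (1 + x) ^ q := by
  rcases eq_or_ne p 0 with rfl | hp
  · obtain rfl : q = 0 := by omega
    simp
  exact (one_add_sub_mul_lt_zpow_mul_zpow_of_add_eq_zero hx₀ hx₁ hpq hp).le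

theorem one_add_sub_mul_le_zpow_mul_zpow (hx₀ : 0 < x) (hx₁ : x < 1) (hpq : p + q ≤ 1) :
    1 + ((q : K) - p) * x ≤ (1 - x) ^ p * (1 + x) ^ q := by
  obtain ⟨u, hu⟩ : ∃ u : ℕ, p + q + 2 * u = 1 ∨ p + q + 2 * u = 0 :=
    ⟨((1 - p - q) / 2).toNat, by omega⟩
  have hx : (1 - x) * (1 + x) ≤ 1 := by nlinarith
  calc 1 + ((q : K) - p) * x = 1 + (((q + u : ℤ) : K) - (p + u : ℤ)) * x := by push_cast; ring
    _ ≤ (1 - x) ^ (p + u) * (1 + x) ^ (q + u) := by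
        rcases hu with hu | hu
        · exact one_add_sub_mul_le_zpow_mul_zpow_of_add_eq_one (by linarith) hx₁ (by omega)
        · exact one_add_sub_mul_le_zpow_mul_zpow_of_add_eq_zero hx₀ hx₁ (by omega)
    _ ≤ (1 - x) ^ p * (1 + x) ^ q := zpow_add_mul_zpow_add_le (by linarith) (by linarith) hx

theorem one_add_sub_mul_lt_zpow_mul_zpow (hx₀ : 0 < x) (hx₁ : x < 1) (hpq : p + q ≤ 1)
    (hpq' : ¬(p = 0 ∧ q = 0 ∨ p = 0 ∧ q = 1 ∨ p = 1 ∧ q = 0)) :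
    1 + ((q : K) - p) * x < (1 - x) ^ p * (1 + x) ^ q := by
  obtain hpq | hpq | hpq : p + q = 1 ∨ p + q = 0 ∨ p + q ≤ -1 := by omega
  · exact one_add_sub_mul_lt_zpow_mul_zpow_of_add_eq_one (by linarith) hx₁ hx₀.ne' hpq
      (by omega) (by omega)
  · exact one_add_sub_mul_lt_zpow_mul_zpow_of_add_eq_zero hx₀ hx₁ hpq (by omega)
  · have hx : (1 - x) * (1 + x) < 1 := by nlinarith
    calc 1 + ((q : K) - p) * x = 1 + (((q + 1 : ℤ) : K) - (p + 1 : ℤ)) * x := by push_cast; ring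
      _ ≤ (1 - x) ^ (p + 1) * (1 + x) ^ (q + 1) :=
          one_add_sub_mul_le_zpow_mul_zpow hx₀ hx₁ (by omega)
      _ < (1 - x) ^ p * (1 + x) ^ q :=
          zpow_add_one_mul_zpow_add_one_lt (by linarith) (by linarith) hx

theorem one_add_sub_mul_eq_zpow_mul_zpow_iff (hx₀ : 0 < x) (hx₁ : x < 1) (hpq : p + q ≤ 1) :
    1 + ((q : K) - p) * x = (1 - x) ^ p * (1 + x) ^ q ↔
      p = 0 ∧ q = 0 ∨ p = 0 ∧ q = 1 ∨ p = 1 ∧ q = 0 := by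
  refine ⟨fun h => ?_, ?_⟩
  · by_contra hpq'
    exact (one_add_sub_mul_lt_zpow_mul_zpow hx₀ hx₁ hpq hpq').ne h
  · rintro (⟨rfl, rfl⟩ | ⟨rfl, rfl⟩ | ⟨rfl, rfl⟩) <;> simp [sub_eq_add_neg]

end

/-- **"Two-sided Bernoulli inequality", odd case.**  For odd `k ≥ 3` and
naturals `i, j` with `i + j ≤ k`,
`1 + (j-i)/k ≤ (1 - 1/k)^(i - (k-1)/2) · (1 + 1/k)^(j - (k-1)/2)` (integer
exponents, possibly negative), with equality if and only if
`(i,j) ∈ {((k-1)/2, (k-1)/2), ((k-1)/2, (k+1)/2), ((k+1)/2, (k-1)/2)}`. -/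
theorem two_sided_bernoulli_odd (k : ℕ) (hk : 3 ≤ k) (hko : Odd k)
    (i j : ℕ) (hij : i + j ≤ k) :
    1 + ((j : ℝ) - (i : ℝ)) / k ≤
      (1 - 1 / (k : ℝ)) ^ ((i : ℤ) - ((k : ℤ) - 1) / 2) *
        (1 + 1 / (k : ℝ)) ^ ((j : ℤ) - ((k : ℤ) - 1) / 2) ∧
    (1 + ((j : ℝ) - (i : ℝ)) / k =
        (1 - 1 / (k : ℝ)) ^ ((i : ℤ) - ((k : ℤ) - 1) / 2) *
          (1 + 1 / (k : ℝ)) ^ ((j : ℤ) - ((k : ℤ) - 1) / 2) ↔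
      ((i = (k - 1) / 2 ∧ j = (k - 1) / 2) ∨ (i = (k - 1) / 2 ∧ j = (k + 1) / 2) ∨
        (i = (k + 1) / 2 ∧ j = (k - 1) / 2))) := by
  obtain ⟨m, rfl⟩ := hko
  have hk' : (3 : ℝ) ≤ ((2 * m + 1 : ℕ) : ℝ) := by exact_mod_cast hk
  have hx₀ : (0 : ℝ) < 1 / ((2 * m + 1 : ℕ) : ℝ) := by positivity
  have hx₁ : 1 / ((2 * m + 1 : ℕ) : ℝ) < 1 := by rw [div_lt_one] <;> linarith
  have hm : (((2 * m + 1 : ℕ) : ℤ) - 1) / 2 = m := by omega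
  have hlhs : 1 + ((j : ℝ) - i) / ((2 * m + 1 : ℕ) : ℝ) =
      1 + (((j - m : ℤ) : ℝ) - ((i - m : ℤ) : ℝ)) * (1 / ((2 * m + 1 : ℕ) : ℝ)) := by
    push_cast; ring
  rw [hm, hlhs]
  refine ⟨one_add_sub_mul_le_zpow_mul_zpow hx₀ hx₁ (by omega),
    (one_add_sub_mul_eq_zpow_mul_zpow_iff hx₀ hx₁ (by omega)).trans (by omega)⟩
end

section
/- Fix an even integer k ≥ 2. There exists ε_0 > 0 such that for all 0 < ε < ε_0 the following holds. Let β = (1 − 1/(k+1))^{k/2}(1 + 1/(k+1))^{k/2}, let η = 1 − β^{−1}(1 − 1/(k+1) − ε)^{k/2}(1 + 1/(k+1) + ε)^{k/2}, and let δ = ε if k = 2 and δ = 4η otherwise. Then there exist reals X, Y ≥ 0 satisfying all six strict inequalities: (1) ½(1−δ)X < 1−η; (2) 2 − ½(1+δ)X < 1−η; (3) (½ + 1/k)(1−δ)X < (1−η)(1 + 1/(k+1) + ε)(1 − 1/(k+1) − ε)^{−1}; (4) 2 − (½ − 1/k)(1+δ)X < (1−η)(1 + 1/(k+1) + ε)(1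 − 1/(k+1) − ε)^{−1}; (5) (1/k)(1+δ)Y + ½(1−δ)X < (1−η)(1 − 1/(k+1) − ε)^{−1}; (6) 2 − (1/k)(1−δ)Y − (½ − 1/k)(1+δ)X < (1−η)(1 − 1/(k+1) − ε)^{−1}. -/
/-!
With `X = 2` and `Y = 1` all six inequalities become equalities at `ε = η = δ = 0`, because
`(1 + 1/k)(1 - 1/(k+1)) = 1`. The perturbation then has the right sign in each of them as soon as
`0 < η < ε` and `η < δ`, and, for `k = 2` where `δ = ε`, the `δ`-term of (6) is dominated by `ε`.

With `u = 1/(k+1)` we have `η = 1 - r^(k/2)` for `r = (1-u-ε)(1+u+ε)/((1-u)(1+u))`, and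
Bernoulli's inequality gives `η ≤ (k/2)(1 - r) = (k/2) ε (2u + ε)/(1 - u²)`, which is `< ε`
exactly when `ε < 2/(k+1)²`.
-/

theorem inv_mul_pow_mul_pow_eq_div_pow {K : Type*} [Field K] (m : ℕ) (a b c d : K) :
    (a ^ m * b ^ m)⁻¹ * c ^ m * d ^ m = (c * d / (a * b)) ^ m := by
  rw [div_pow, mul_pow, mul_pow]; ring

noncomputable def perturbedRatio (u ε : ℝ) : ℝ := (1 - u - ε) * (1 + u + ε) / ((1 - u) * (1 + u))

theorem one_sub_perturbedRatio {u ε : ℝ} (hu : 0 ≤ u) (hu1 : u < 1) :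
    1 - perturbedRatio u ε = ε * (2 * u + ε) / ((1 - u) * (1 + u)) := by
  have : (1 - u) * (1 + u) ≠ 0 := by nlinarith
  rw [perturbedRatio, eq_div_iff this, sub_mul, div_mul_cancel₀ _ this]; ring

theorem perturbedRatio_nonneg {u ε : ℝ} (hu : 0 ≤ u) (hε : 0 ≤ ε) (hεu : ε ≤ 1 - u) :
    0 ≤ perturbedRatio u ε := by
  have : 0 ≤ 1 - u := by linarith
  unfold perturbedRatio
  apply div_nonneg <;> apply mul_nonneg <;> linarith

theorem perturbedRatio_lt_one {u ε : ℝ} (hu : 0 ≤ u) (hu1 : u < 1) (hε : 0 < ε) :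
    perturbedRatio u ε < 1 := by
  have hgap := one_sub_perturbedRatio (ε := ε) hu hu1
  have hgap_pos : 0 < ε * (2 * u + ε) / ((1 - u) * (1 + u)) := by
    apply div_pos <;> apply mul_pos <;> linarith
  linarith

theorem one_sub_perturbedRatio_pow_pos {m : ℕ} (hm : m ≠ 0) {u ε : ℝ} (hu : 0 ≤ u) (hu1 : u < 1)
    (hε : 0 < ε) (hεu : ε ≤ 1 - u) :
    0 < 1 - perturbedRatio u ε ^ m :=
  sub_pos.2 (pow_lt_one₀ (perturbedRatio_nonneg hu hε.le hεu) (perturbedRatio_lt_one hu hu1 hε) hm)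

theorem one_sub_perturbedRatio_pow_lt {m : ℕ} {u ε : ℝ} (hu : 0 ≤ u) (hu1 : u < 1)
    (hε : 0 < ε) (hεu : ε ≤ 1 - u) (hm : m * (2 * u + ε) < (1 - u) * (1 + u)) :
    1 - perturbedRatio u ε ^ m < ε := by
  have hbern := one_add_mul_sub_le_pow
    (le_trans (by norm_num) (perturbedRatio_nonneg hu hε.le hεu)) m
  have hden : 0 < (1 - u) * (1 + u) := by nlinarith
  calc 1 - perturbedRatio u ε ^ m
      ≤ m * (1 - perturbedRatio u ε) := by linarith
    _ = ε * (m * (2 * u + ε) / ((1 - u) * (1 + u))) := by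
      rw [one_sub_perturbedRatio hu hu1]; ring
    _ < ε * 1 := by gcongr; rwa [div_lt_one hden]
    _ = ε := mul_one ε

theorem half_mul_lt_of_lt_two_div_sq {k : ℕ} (hk : 0 < k) {ε : ℝ} (hε0 : 0 ≤ ε)
    (hε : ε < 2 / ((k : ℝ) + 1) ^ 2) :
    ((k / 2 : ℕ) : ℝ) * (2 * (1 / ((k : ℝ) + 1)) + ε) <
      (1 - 1 / ((k : ℝ) + 1)) * (1 + 1 / ((k : ℝ) + 1)) := by
  have hk0 : (0 : ℝ) < k := by exact_mod_cast hk
  have hhalf : ((k / 2 : ℕ) : ℝ) ≤ k / 2 := Nat.cast_div_le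
  calc ((k / 2 : ℕ) : ℝ) * (2 * (1 / ((k : ℝ) + 1)) + ε)
      ≤ k / 2 * (2 * (1 / ((k : ℝ) + 1)) + ε) := by gcongr
    _ < k / 2 * (2 * (1 / ((k : ℝ) + 1)) + 2 / ((k : ℝ) + 1) ^ 2) := by gcongr
    _ = (1 - 1 / ((k : ℝ) + 1)) * (1 + 1 / ((k : ℝ) + 1)) := by field_simp; ring

def CoreInequalities (k ε η δ X Y : ℝ) : Prop :=
  (1 / 2) * (1 - δ) * X < 1 - η ∧
  2 - (1 / 2) * (1 + δ) * X < 1 - η ∧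
  (1 / 2 + 1 / k) * (1 - δ) * X < (1 - η) * (1 + 1 / (k + 1) + ε) * (1 - 1 / (k + 1) - ε)⁻¹ ∧
  2 - (1 / 2 - 1 / k) * (1 + δ) * X < (1 - η) * (1 + 1 / (k + 1) + ε) * (1 - 1 / (k + 1) - ε)⁻¹ ∧
  (1 / k) * (1 + δ) * Y + (1 / 2) * (1 - δ) * X < (1 - η) * (1 - 1 / (k + 1) - ε)⁻¹ ∧
  2 - (1 / k) * (1 - δ) * Y - (1 / 2 - 1 / k) * (1 + δ) * X < (1 - η) * (1 - 1 / (k + 1) - ε)⁻¹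

theorem coreInequalities_two_one {k ε η δ : ℝ} (hk : 2 ≤ k) (hε : 0 < ε)
    (hεk : ε < 1 - 1 / (k + 1)) (hηε : η < ε) (hηδ : η < δ) (hδ : 0 ≤ δ)
    (hδε : (3 - k) * δ ≤ ε) : CoreInequalities k ε η δ 2 1 := by
  unfold CoreInequalities
  set u := 1 / (k + 1) with hu
  set v := 1 / k with hv
  have hu0 : 0 < u := by positivity
  have hu3 : u ≤ 1 / 3 := by rw [hu]; gcongr; linarith
  have hv0 : 0 < v := by positivity
  have hv2 : v ≤ 1 / 2 := by rw [hv]; gcongr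
  have ha : 0 < 1 - u - ε := by linarith
  have huv : (1 + v) * (1 - u) = 1 := by rw [hu, hv]; field_simp; ring
  have hδv : -(v * ε) ≤ δ * (1 - 3 * v) := by
    rw [hv]; field_simp; linarith
  refine ⟨by linarith, by linarith, ?_, ?_, ?_, ?_⟩ <;>
    rw [← div_eq_mul_inv, lt_div_iff₀ ha]
  · nlinarith [mul_nonneg hv0.le hδ, mul_nonneg (mul_nonneg hv0.le hδ) ha.le]
  · nlinarith [mul_nonneg (mul_nonneg hδ (by linarith : (0:ℝ) ≤ 1 - 2 * v)) ha.le]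
  · nlinarith [mul_nonneg (mul_nonneg hδ (by linarith : (0:ℝ) ≤ 1 - v)) ha.le]
  · nlinarith [mul_le_mul_of_nonneg_right hδv ha.le,
      mul_pos (mul_pos hv0 hε) (by linarith : (0:ℝ) < u + ε)]

theorem core_strict_even_general (k : ℕ) (hk : 2 ≤ k) :
    ∃ ε₀ : ℝ, 0 < ε₀ ∧
      ∀ ε : ℝ, 0 < ε → ε < ε₀ →
        ∀ β η δ : ℝ,
          β = (1 - 1 / ((k : ℝ) + 1)) ^ (k / 2) * (1 + 1 / ((k : ℝ) + 1)) ^ (k / 2) →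
          η = 1 - β⁻¹ * (1 - 1 / ((k : ℝ) + 1) - ε) ^ (k / 2) *
                (1 + 1 / ((k : ℝ) + 1) + ε) ^ (k / 2) →
          δ = (if k = 2 then ε else 4 * η) →
          ∃ X Y : ℝ, 0 ≤ X ∧ 0 ≤ Y ∧
            (1 / 2) * (1 - δ) * X < 1 - η ∧
            2 - (1 / 2) * (1 + δ) * X < 1 - η ∧
            (1 / 2 + 1 / (k : ℝ)) * (1 - δ) * X <
              (1 - η) * (1 + 1 / ((k : ℝ) + 1) + ε) * (1 - 1 / ((k : ℝ) + 1) - ε)⁻¹ ∧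
            2 - (1 / 2 - 1 / (k : ℝ)) * (1 + δ) * X <
              (1 - η) * (1 + 1 / ((k : ℝ) + 1) + ε) * (1 - 1 / ((k : ℝ) + 1) - ε)⁻¹ ∧
            (1 / (k : ℝ)) * (1 + δ) * Y + (1 / 2) * (1 - δ) * X <
              (1 - η) * (1 - 1 / ((k : ℝ) + 1) - ε)⁻¹ ∧
            2 - (1 / (k : ℝ)) * (1 - δ) * Y - (1 / 2 - 1 / (k : ℝ)) * (1 + δ) * X <
              (1 - η) * (1 - 1 / ((k : ℝ) + 1) - ε)⁻¹ := by
  have hkR : (2 : ℝ) ≤ k := by exact_mod_cast hk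
  refine ⟨2 / ((k : ℝ) + 1) ^ 2, by positivity, fun ε hε hε₀ β η δ hβ hη hδ => ?_⟩
  have hu0 : (0 : ℝ) ≤ 1 / ((k : ℝ) + 1) := by positivity
  have hu1 : 1 / ((k : ℝ) + 1) < 1 := by rw [div_lt_one (by positivity)]; linarith
  have hεu : ε < 1 - 1 / ((k : ℝ) + 1) := by
    rw [lt_div_iff₀ (by positivity)] at hε₀
    rw [one_sub_div (by positivity), lt_div_iff₀ (by positivity)]; nlinarith
  rw [hβ, inv_mul_pow_mul_pow_eq_div_pow] at hη
  change η = 1 - perturbedRatio _ ε ^ (k / 2) at hη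
  have hη0 : 0 < η := hη ▸ one_sub_perturbedRatio_pow_pos (by omega) hu0 hu1 hε hεu.le
  have hηε : η < ε := hη ▸ one_sub_perturbedRatio_pow_lt hu0 hu1 hε hεu.le
    (half_mul_lt_of_lt_two_div_sq (by omega) hε.le hε₀)
  obtain ⟨hηδ, hδ0, hδε⟩ : η < δ ∧ 0 ≤ δ ∧ (3 - k) * δ ≤ ε := by
    split_ifs at hδ with h2
    · subst hδ h2
      exact ⟨hηε, hε.le, by norm_num⟩
    · have : (3 : ℝ) ≤ k := by exact_mod_cast (by omega : 3 ≤ k)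
      subst hδ
      exact ⟨by linarith, by linarith, by nlinarith⟩
  exact ⟨2, 1, zero_le_two, zero_le_one, coreInequalities_two_one hkR hε hεu hηε hηδ hδ0 hδε⟩

/-- **Strict satisfaction of the core inequalities, even case.**  Fix an even
`k ≥ 2`.  There is `ε₀ > 0` such that for all `0 < ε < ε₀`, with
`β = (1-1/(k+1))^{k/2}(1+1/(k+1))^{k/2}`,
`η = 1 - β⁻¹(1-1/(k+1)-ε)^{k/2}(1+1/(k+1)+ε)^{k/2}`, and `δ = ε` if `k = 2`
and `δ = 4η` otherwise, there exist `X, Y ≥ 0` satisfying the six strict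
inequalities of Lemma (core, even). -/
theorem core_strict_even (k : ℕ) (hk : 2 ≤ k) (hke : Even k) :
    ∃ ε₀ : ℝ, 0 < ε₀ ∧
      ∀ ε : ℝ, 0 < ε → ε < ε₀ →
        ∀ β η δ : ℝ,
          β = (1 - 1 / ((k : ℝ) + 1)) ^ (k / 2) * (1 + 1 / ((k : ℝ) + 1)) ^ (k / 2) →
          η = 1 - β⁻¹ * (1 - 1 / ((k : ℝ) + 1) - ε) ^ (k / 2) *
                (1 + 1 / ((k : ℝ) + 1) + ε) ^ (k / 2) →
          δ = (if k = 2 then ε else 4 * η) →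
          ∃ X Y : ℝ, 0 ≤ X ∧ 0 ≤ Y ∧
            (1 / 2) * (1 - δ) * X < 1 - η ∧
            2 - (1 / 2) * (1 + δ) * X < 1 - η ∧
            (1 / 2 + 1 / (k : ℝ)) * (1 - δ) * X <
              (1 - η) * (1 + 1 / ((k : ℝ) + 1) + ε) * (1 - 1 / ((k : ℝ) + 1) - ε)⁻¹ ∧
            2 - (1 / 2 - 1 / (k : ℝ)) * (1 + δ) * X <
              (1 - η) * (1 + 1 / ((k : ℝ) + 1) + ε) * (1 - 1 / ((k : ℝ) + 1) - ε)⁻¹ ∧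
            (1 / (k : ℝ)) * (1 + δ) * Y + (1 / 2) * (1 - δ) * X <
              (1 - η) * (1 - 1 / ((k : ℝ) + 1) - ε)⁻¹ ∧
            2 - (1 / (k : ℝ)) * (1 - δ) * Y - (1 / 2 - 1 / (k : ℝ)) * (1 + δ) * X <
              (1 - η) * (1 - 1 / ((k : ℝ) + 1) - ε)⁻¹ :=
  core_strict_even_general k hk
end

section
/- Fix an odd integer k ≥ 3. There exists ε_0 > 0 such that for all 0 < ε < ε_0 the following holds. Let β = (1 − 1/k)^{(k−1)/2}(1 + 1/k)^{(k−1)/2}, let η = 1 − β^{−1}(1 − 1/k − ε)^{(k−1)/2}(1 + 1/k + ε)^{(k−1)/2}, and let δ = 5η. Then there exist reals X, Y ≥ 0 satisfying all six strict inequalities: (1) (½ + 1/(2k))(1−δ)X < (1−η)(1 + 1/k + ε); (2) 2 − (½ − 1/(2k))(1+δ)X < (1−η)(1 + 1/k + ε); (3) (½ − 1/(2k))(1−δ)X < (1−η)(1 − 1/k − ε); (4) 2 − (½ + 1/(2k))(1+δ)X < (1−η)(1 − 1/k − ε); (5) (1/k)(1+δ)Y + (½ − 1/(2k))(1−δ)X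 < 1−η; (6) 2 − (1/k)(1−δ)Y − (½ − 1/(2k))(1+δ)X < 1−η. -/
/-!
Write `u = 1/k` and `m = (k-1)/2`, so that `2mu = 1 - u`. Since
`(1-u-ε)(1+u+ε) = (1-u²)(1-s)` with `s = ε(2u+ε)/(1-u²)`, we get `η = 1 - (1-s)^m`.
Bernoulli's inequality gives `(1-s)^m (1+ms) ≤ 1`, and `ms ≥ 2muε = (1-u)ε ≥ 2ε/3`;
for `ε < 1/2` this forces `η ≥ ε/2`. Once `η ≥ ε/2 > 0` and `k ≥ 3`, the point
`X = 2, Y = 1` satisfies all six inequalities, each of which becomes linear in `η` and `ε`.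
-/

theorem one_sub_pow_mul_one_add_mul_le_one {s : ℝ} (hs0 : 0 ≤ s) (hs1 : s ≤ 1) (m : ℕ) :
    (1 - s) ^ m * (1 + m * s) ≤ 1 :=
  calc (1 - s) ^ m * (1 + m * s) ≤ (1 - s) ^ m * (1 + s) ^ m :=
        mul_le_mul_of_nonneg_left (one_add_mul_le_pow (by linarith) m)
          (pow_nonneg (by linarith) m)
    _ = (1 - s ^ 2) ^ m := by rw [← mul_pow]; ring
    _ ≤ 1 := pow_le_one₀ (by nlinarith) (by nlinarith)

theorem le_two_mul_one_sub_ratio_pow {m : ℕ} {u ε : ℝ} (hmu : 1 - u ≤ 2 * m * u)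
    (hu : u ≤ 1 / 3) (hε0 : 0 < ε) (hε : ε < 1 / 2) :
    ε ≤ 2 * (1 - ((1 - u - ε) * (1 + u + ε) / ((1 - u) * (1 + u))) ^ m) := by
  have hmu0 : 0 < m * u := by linarith
  have hu0 : 0 < u := pos_of_mul_pos_right hmu0 (Nat.cast_nonneg m)
  have hd0 : 0 < (1 - u) * (1 + u) := by nlinarith
  set s := ε * (2 * u + ε) / ((1 - u) * (1 + u)) with hs
  have hratio : (1 - u - ε) * (1 + u + ε) / ((1 - u) * (1 + u)) = 1 - s := by
    rw [hs, one_sub_div hd0.ne']; ring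
  have hs0 : 0 ≤ s := by positivity
  have hs1 : s ≤ 1 := by rw [hs, div_le_one hd0]; nlinarith
  have hms : 2 / 3 * ε ≤ m * s := by
    have : m * u * ε * 2 ≤ m * s := by
      rw [hs, mul_div_assoc', le_div_iff₀ hd0]
      nlinarith [mul_pos (mul_pos (mul_pos hmu0 hε0) hu0) hu0, mul_pos (mul_pos hmu0 hε0) hε0]
    nlinarith
  have hbound := one_sub_pow_mul_one_add_mul_le_one hs0 hs1 m
  rw [hratio]
  nlinarith [pow_nonneg (sub_nonneg.2 hs1) m]

theorem core_inequalities_two_one {k ε η : ℝ} (hk : 3 ≤ k) (hε0 : 0 < ε) (hε : ε < 1 / 2)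
    (hεη : ε ≤ 2 * η) :
    (1 / 2 + 1 / (2 * k)) * (1 - 5 * η) * 2 < (1 - η) * (1 + 1 / k + ε) ∧
    2 - (1 / 2 - 1 / (2 * k)) * (1 + 5 * η) * 2 < (1 - η) * (1 + 1 / k + ε) ∧
    (1 / 2 - 1 / (2 * k)) * (1 - 5 * η) * 2 < (1 - η) * (1 - 1 / k - ε) ∧
    2 - (1 / 2 + 1 / (2 * k)) * (1 + 5 * η) * 2 < (1 - η) * (1 - 1 / k - ε) ∧
    1 / k * (1 + 5 * η) * 1 + (1 / 2 - 1 / (2 * k)) * (1 - 5 * η) * 2 < 1 - η ∧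
    2 - 1 / k * (1 - 5 * η) * 1 - (1 / 2 - 1 / (2 * k)) * (1 + 5 * η) * 2 < 1 - η := by
  set u := 1 / k with hu
  have hu0 : 0 < u := by positivity
  have hu3 : u ≤ 1 / 3 := by rw [hu]; exact one_div_le_one_div_of_le (by norm_num) hk
  have h2k : 1 / (2 * k) = u / 2 := by rw [hu]; ring
  have hη0 : 0 < η := by linarith
  rw [h2k]
  refine ⟨?_, ?_, ?_, ?_, ?_, ?_⟩ <;>
    nlinarith [mul_pos hη0 hε0, mul_pos hη0 hu0, mul_le_mul_of_nonneg_right hu3 hη0.le]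

/-- **Strict satisfaction of the core inequalities, odd case.**  Fix an odd
`k ≥ 3`.  There is `ε₀ > 0` such that for all `0 < ε < ε₀`, with
`β = (1-1/k)^{(k-1)/2}(1+1/k)^{(k-1)/2}`,
`η = 1 - β⁻¹(1-1/k-ε)^{(k-1)/2}(1+1/k+ε)^{(k-1)/2}`, and `δ = 5η`, there exist
`X, Y ≥ 0` satisfying the six strict inequalities of Lemma (core, odd). -/
theorem core_strict_odd (k : ℕ) (hk : 3 ≤ k) (hko : Odd k) :
    ∃ ε₀ : ℝ, 0 < ε₀ ∧
      ∀ ε : ℝ, 0 < ε → ε < ε₀ →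
        ∀ β η δ : ℝ,
          β = (1 - 1 / (k : ℝ)) ^ ((k - 1) / 2) * (1 + 1 / (k : ℝ)) ^ ((k - 1) / 2) →
          η = 1 - β⁻¹ * (1 - 1 / (k : ℝ) - ε) ^ ((k - 1) / 2) *
                (1 + 1 / (k : ℝ) + ε) ^ ((k - 1) / 2) →
          δ = 5 * η →
          ∃ X Y : ℝ, 0 ≤ X ∧ 0 ≤ Y ∧
            (1 / 2 + 1 / (2 * (k : ℝ))) * (1 - δ) * X < (1 - η) * (1 + 1 / (k : ℝ) + ε) ∧
            2 - (1 / 2 - 1 / (2 * (k : ℝ))) * (1 + δ) * X < (1 - η) * (1 + 1 / (k : ℝ) + ε) ∧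
            (1 / 2 - 1 / (2 * (k : ℝ))) * (1 - δ) * X < (1 - η) * (1 - 1 / (k : ℝ) - ε) ∧
            2 - (1 / 2 + 1 / (2 * (k : ℝ))) * (1 + δ) * X < (1 - η) * (1 - 1 / (k : ℝ) - ε) ∧
            (1 / (k : ℝ)) * (1 + δ) * Y + (1 / 2 - 1 / (2 * (k : ℝ))) * (1 - δ) * X < 1 - η ∧
            2 - (1 / (k : ℝ)) * (1 - δ) * Y - (1 / 2 - 1 / (2 * (k : ℝ))) * (1 + δ) * X < 1 - η := by
  refine ⟨1 / 2, by norm_num, fun ε hε0 hε β η δ hβ hη hδ => ?_⟩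
  have hk3 : (3 : ℝ) ≤ k := by exact_mod_cast hk
  obtain ⟨m, rfl⟩ := hko
  rw [show (2 * m + 1 - 1) / 2 = m by omega] at hβ hη
  set u := 1 / ((2 * m + 1 : ℕ) : ℝ) with hu
  have hmu : 1 - u = 2 * m * u := by rw [hu]; push_cast; field_simp; ring
  have hη' : η = 1 - ((1 - u - ε) * (1 + u + ε) / ((1 - u) * (1 + u))) ^ m := by
    rw [hη, hβ, div_pow, mul_pow, mul_pow, mul_assoc, ← mul_pow]
    ring
  have hεη : ε ≤ 2 * η :=
    hη' ▸ le_two_mul_one_sub_ratio_pow hmu.le (one_div_le_one_div_of_le (by norm_num) hk3) hε0 hε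
  subst hδ
  exact ⟨2, 1, zero_le_two, zero_le_one, core_inequalities_two_one hk3 hε0 hε hεη⟩
end

section
/- For every integer k ≥ 2, let t = (0,1) (so ℓ = 1 and L = 3). There exists a map W : Ptn_k^3 → ℝ_{≥0} which is feasible for the primal linear program — i.e., Σ_{c ∈ PosPtn_k^3} W(c) = 1 and for every i ∈ {−1,0,+1}, t_i^−·(W^+(i)+W^−(i)) ≤ W^+(i)−W^−(i) ≤ t_i^+·(W^+(i)+W^−(i)), where W^±(i) = Σ_c c_i^±·W(c) — such that for all p ∈ [0,1], the objective satisfies Σ_{c ∈ Ptn_k^3} prob^{(p)}(c)·W(c) ≤ α*_k, with equality if and only if p = p*_k. -/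
open scoped BigOperators
open Classical

/-- A clause pattern in `Ptn_k^L` (`L = 2ℓ+1`): a tuple of counts
`(c_i^+, c_i^-)` for each bias class `i ∈ {-ℓ,…,+ℓ}`, all natural numbers,
summing to `k`.  The raw index `r : Fin (2ℓ+1)` encodes the bias class `r - ℓ`
(so raw index `ℓ` is class `0`, `ℓ+i` is class `+i`, and `ℓ-i` is class `-i`). -/
def Ptn (k ℓ : ℕ) :=
  { c : Fin (2*ℓ+1) → Fin (k+1) × Fin (k+1) //
    ∑ i, (((c i).1 : ℕ) + ((c i).2 : ℕ)) = k }

noncomputable instance (k ℓ : ℕ) : Fintype (Ptn k ℓ) := by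
  unfold Ptn; infer_instance

namespace Ptn

/-- `c_i^+` read off at raw class index `r` (zero out of range). -/
def cp {k ℓ : ℕ} (c : Ptn k ℓ) (r : ℕ) : ℕ :=
  if h : r < 2*ℓ+1 then ((c.1 ⟨r, h⟩).1 : ℕ) else 0

/-- `c_i^-` read off at raw class index `r` (zero out of range). -/
def cm {k ℓ : ℕ} (c : Ptn k ℓ) (r : ℕ) : ℕ :=
  if h : r < 2*ℓ+1 then ((c.1 ⟨r, h⟩).2 : ℕ) else 0

/-- Membership in `PosPtn_k^L`: a pattern with no negated literals. -/
def IsPos {k ℓ : ℕ} (c : Ptn k ℓ) : Prop := ∀ i, ((c.1 i).2 : ℕ) = 0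

end Ptn

/-- `prob^p(c)` for a pattern `c ∈ Ptn_k^L`, with the convention `0^0 = 1`:
`2^{-(c₀⁺+c₀⁻)} ∏_{i=1}^ℓ p_i^{c_{+i}⁺+c_{-i}⁻} (1-p_i)^{c_{+i}⁻+c_{-i}⁺}`. -/
noncomputable def patProb {k ℓ : ℕ} (p : ℕ → ℝ) (c : Ptn k ℓ) : ℝ :=
  (1/2 : ℝ) ^ (c.cp ℓ + c.cm ℓ) *
    ∏ i ∈ Finset.Icc 1 ℓ,
      (p i) ^ (c.cp (ℓ + i) + c.cm (ℓ - i)) * (1 - p i) ^ (c.cm (ℓ + i) + c.cp (ℓ - i))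

/-- `t_i^- = inf Int_i`, read off at raw class index `r` (class `i = r - ℓ`). -/
noncomputable def tLo {ℓ : ℕ} (T : BiasPartition ℓ) (r : ℕ) : ℝ :=
  if r = ℓ then -T.t 0 else if ℓ < r then T.t (r - ℓ - 1) else -T.t (ℓ - r)

/-- `t_i^+ = sup Int_i`, read off at raw class index `r` (class `i = r - ℓ`). -/
noncomputable def tHi {ℓ : ℕ} (T : BiasPartition ℓ) (r : ℕ) : ℝ :=
  if r = ℓ then T.t 0 else if ℓ < r then T.t (r - ℓ) else -T.t (ℓ - r - 1)

/-- `W⁺(i) = ∑_c c_i^+ W(c)`, at raw class index `r`. -/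
noncomputable def Wp {k ℓ : ℕ} (W : Ptn k ℓ → ℝ) (r : ℕ) : ℝ :=
  ∑ c : Ptn k ℓ, (c.cp r : ℝ) * W c

/-- `W⁻(i) = ∑_c c_i^- W(c)`, at raw class index `r`. -/
noncomputable def Wm {k ℓ : ℕ} (W : Ptn k ℓ → ℝ) (r : ℕ) : ℝ :=
  ∑ c : Ptn k ℓ, (c.cm r : ℝ) * W c

/-- The bias partition `t = (0, 1)` with `ℓ = 1` (so `L = 3`). -/
noncomputable def T01 : BiasPartition 1 where
  t := fun i => if i = 0 then 0 else 1
  t0_nonneg := by simp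
  mono := by
    intro i hi
    interval_cases i
    norm_num
  t_top := by norm_num

/-!
The witness `W` lives on three patterns that use only the classes `±1`, so its objective is
`C · p^a (1-p)^b (ρ-p)^c` for suitable constants. The weights are chosen so that the bias
constraints hold, the critical point of this polynomial is `p*_k`, and its value there is
`α*_k`. That the critical point is the unique maximiser on `[0, 1]` is AM-GM in the form
`x ≤ exp (x - 1)`, applied to `x = p / p*_k`, `(1-p) / (1-p*_k)` and `(ρ-p) / (ρ-p*_k)`.
-/

open Real

theorem pow_le_exp_mul_sub_one {x : ℝ} (hx : 0 ≤ x) (n : ℕ) :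
    x ^ n ≤ exp (n * (x - 1)) := by
  rw [exp_nat_mul]
  exact pow_le_pow_left₀ hx (by linarith [add_one_le_exp (x - 1)]) n

theorem pow_lt_exp_mul_sub_one {x : ℝ} (hx : 0 ≤ x) (hx1 : x ≠ 1) {n : ℕ} (hn : n ≠ 0) :
    x ^ n < exp (n * (x - 1)) := by
  rw [exp_nat_mul]
  exact pow_lt_pow_left₀ (by linarith [add_one_lt_exp (sub_ne_zero.mpr hx1)]) hx hn

theorem pow_mul_pow_mul_pow_lt_one {x y z : ℝ} (hx : 0 ≤ x) (hy : 0 ≤ y) (hz : 0 ≤ z)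
    (hx1 : x ≠ 1) {a b c : ℕ} (ha : a ≠ 0)
    (h : a * (x - 1) + b * (y - 1) + c * (z - 1) = 0) : x ^ a * y ^ b * z ^ c < 1 :=
  calc x ^ a * y ^ b * z ^ c
      ≤ x ^ a * (exp (b * (y - 1)) * exp (c * (z - 1))) := by
        rw [mul_assoc]
        gcongr
        · exact pow_le_exp_mul_sub_one hy b
        · exact pow_le_exp_mul_sub_one hz c
    _ < exp (a * (x - 1)) * (exp (b * (y - 1)) * exp (c * (z - 1))) := by
        gcongr
        exact pow_lt_exp_mul_sub_one hx hx1 ha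
    _ = 1 := by rw [← exp_add, ← exp_add, ← add_assoc, h, exp_zero]

/-- `hcrit` is the critical-point equation `a / p₀ = b / (1 - p₀) + c / (ρ - p₀)` with
denominators cleared; it is exactly what makes the weighted deviations from `1` of the ratios
`p / p₀`, `(1 - p) / (1 - p₀)`, `(ρ - p) / (ρ - p₀)` sum to zero. -/
theorem pow_mul_pow_mul_pow_lt_of_critical {a b c : ℕ} (ha : a ≠ 0) {ρ p₀ p : ℝ}
    (hp₀ : p₀ ∈ Set.Ioo 0 1) (hρ : 1 ≤ ρ)
    (hcrit : a * ((1 - p₀) * (ρ - p₀)) = b * (p₀ * (ρ - p₀)) + c * (p₀ * (1 - p₀)))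
    (hp : p ∈ Set.Icc 0 1) (hne : p ≠ p₀) :
    p ^ a * (1 - p) ^ b * (ρ - p) ^ c < p₀ ^ a * (1 - p₀) ^ b * (ρ - p₀) ^ c := by
  obtain ⟨h0, h1⟩ := hp₀
  obtain ⟨hp0, hp1⟩ := hp
  have hs : 0 < 1 - p₀ := by linarith
  have hr : 0 < ρ - p₀ := by linarith
  have hratio : p / p₀ ≠ 1 := fun h => hne ((div_eq_one_iff_eq h0.ne').mp h)
  have hsum : a * (p / p₀ - 1) + b * ((1 - p) / (1 - p₀) - 1) + c * ((ρ - p) / (ρ - p₀) - 1)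
      = 0 := by
    field_simp
    linear_combination (p - p₀) * hcrit
  have hlt := pow_mul_pow_mul_pow_lt_one (by positivity) (div_nonneg (by linarith) hs.le)
    (div_nonneg (by linarith) hr.le) hratio ha hsum
  rw [div_pow, div_pow, div_pow, div_mul_div_comm, div_mul_div_comm,
    div_lt_one (by positivity)] at hlt
  exact hlt

theorem le_and_eq_iff_of_forall_ne_lt {α β : Type*} [Preorder β] {s : Set α} {F : α → β}
    {x₀ : α} (h : ∀ x ∈ s, x ≠ x₀ → F x < F x₀) {x : α} (hx : x ∈ s) :
    F x ≤ F x₀ ∧ (F x = F x₀ ↔ x = x₀) := by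
  rcases eq_or_ne x x₀ with rfl | hne
  · exact ⟨le_rfl, iff_of_true rfl rfl⟩
  · exact ⟨(h x hx hne).le, iff_of_false (h x hx hne).ne hne⟩

theorem sum_mul_sum_pi_single {α ι : Type*} [Fintype α] [DecidableEq α] [Fintype ι]
    (P : ι → α) (w : ι → ℝ) (g : α → ℝ) :
    ∑ a, g a * (∑ j, (Pi.single (P j) (w j) : α → ℝ)) a = ∑ j, g (P j) * w j := by
  simp only [Finset.sum_apply, Finset.mul_sum]
  rw [Finset.sum_comm]
  simp [Pi.single_apply]

namespace Ptn

/-- The pattern with `(c_{-1}^+, c_{-1}^-) = (a, b)`, `(c_{+1}^+, c_{+1}^-) = (e, f)` and no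
literal in class `0` (raw indices `0, 1, 2` are the classes `-1, 0, +1`). -/
def outer {k : ℕ} (a b e f : ℕ) (h : a + b + e + f = k) : Ptn k 1 :=
  ⟨![(⟨a, by omega⟩, ⟨b, by omega⟩), (0, 0), (⟨e, by omega⟩, ⟨f, by omega⟩)], by
    simp [Fin.sum_univ_three]; omega⟩

variable {k a b e f : ℕ} (h : a + b + e + f = k)

@[simp] theorem outer_cp_zero : (outer a b e f h).cp 0 = a := by simp [outer, cp]
@[simp] theorem outer_cm_zero : (outer a b e f h).cm 0 = b := by simp [outer, cm]
@[simp] theorem outer_cp_one : (outer a b e f h).cp 1 = 0 := by simp [outer, cp]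
@[simp] theorem outer_cm_one : (outer a b e f h).cm 1 = 0 := by simp [outer, cm]
@[simp] theorem outer_cp_two : (outer a b e f h).cp 2 = e := by simp [outer, cp]
@[simp] theorem outer_cm_two : (outer a b e f h).cm 2 = f := by simp [outer, cm]

@[simp] theorem outer_isPos_iff : (outer a b e f h).IsPos ↔ b = 0 ∧ f = 0 := by
  refine ⟨fun hpos => ⟨by simpa [outer] using hpos 0, by simpa [outer] using hpos 2⟩, ?_⟩
  rintro ⟨rfl, rfl⟩ i
  fin_cases i <;> rfl

@[simp] theorem patProb_outer (p : ℝ) :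
    patProb (fun _ => p) (outer a b e f h) = p ^ (e + b) * (1 - p) ^ (f + a) := by
  simp [patProb]

end Ptn

theorem pStar_eq {k m : ℕ} (hm : k / 2 = m) : pStar k = (m + 1) / (2 * m + 1) := by
  unfold pStar gammaStar
  obtain ⟨j, rfl | rfl⟩ := Nat.even_or_odd' k
  · obtain rfl : j = m := by omega
    rw [if_neg (Nat.not_odd_iff_even.mpr (even_two_mul j))]
    push_cast
    field_simp
    ring
  · obtain rfl : j = m := by omega
    rw [if_pos (odd_two_mul_add_one j)]
    push_cast
    field_simp
    ring

section HardPrimal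

variable {k : ℕ}

def IsHardPrimal (k : ℕ) (W : Ptn k 1 → ℝ) : Prop :=
  (∀ c, 0 ≤ W c) ∧
  (∑ c ∈ Finset.univ.filter (fun c : Ptn k 1 => c.IsPos), W c) = 1 ∧
  (∀ r, r ≤ 2 →
    tLo T01 r * (Wp W r + Wm W r) ≤ Wp W r - Wm W r ∧
    Wp W r - Wm W r ≤ tHi T01 r * (Wp W r + Wm W r)) ∧
  ∀ p ∈ Set.Icc (0 : ℝ) 1,
    (∑ c, patProb (fun _ => p) c * W c) ≤ alphaStar k ∧
    ((∑ c, patProb (fun _ => p) c * W c) = alphaStar k ↔ p = pStar k)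

theorem Wp_nonneg {ℓ : ℕ} {W : Ptn k ℓ → ℝ} (hW : ∀ c, 0 ≤ W c) (r : ℕ) :
    0 ≤ Wp W r :=
  Finset.sum_nonneg fun c _ => mul_nonneg (Nat.cast_nonneg _) (hW c)

theorem Wm_nonneg {ℓ : ℕ} {W : Ptn k ℓ → ℝ} (hW : ∀ c, 0 ≤ W c) (r : ℕ) :
    0 ≤ Wm W r :=
  Finset.sum_nonneg fun c _ => mul_nonneg (Nat.cast_nonneg _) (hW c)

/-- For `t = (0, 1)` the bias constraints say: class `-1` carries at least as many negated as
plain literals, class `0` equally many, class `+1` at most as many. -/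
theorem isHardPrimal_of {W : Ptn k 1 → ℝ} (hW : ∀ c, 0 ≤ W c)
    (hmass : ∑ c ∈ Finset.univ.filter (fun c : Ptn k 1 => c.IsPos), W c = 1)
    (hneg : Wp W 0 ≤ Wm W 0) (hzero : Wp W 1 = Wm W 1) (hpos : Wm W 2 ≤ Wp W 2)
    {F : ℝ → ℝ} (hobj : ∀ p, ∑ c, patProb (fun _ => p) c * W c = F p)
    (hmax : ∀ p ∈ Set.Icc (0 : ℝ) 1, p ≠ pStar k → F p < F (pStar k))
    (hα : F (pStar k) = alphaStar k) : IsHardPrimal k W := by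
  refine ⟨hW, hmass, fun r hr => ?_, fun p hp => ?_⟩
  · have := Wp_nonneg hW r
    have := Wm_nonneg hW r
    interval_cases r <;> norm_num [tLo, tHi, T01] <;> constructor <;> linarith
  · rw [hobj, ← hα]
    exact le_and_eq_iff_of_forall_ne_lt hmax hp

theorem isHardPrimal_sum_pi_single {ι : Type*} [Fintype ι] (P : ι → Ptn k 1) {w : ι → ℝ}
    (hw : ∀ j, 0 ≤ w j) (hmass : ∑ j ∈ Finset.univ.filter (fun j => (P j).IsPos), w j = 1)
    (hneg : ∑ j, ((P j).cp 0 : ℝ) * w j ≤ ∑ j, ((P j).cm 0 : ℝ) * w j)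
    (hzero : ∑ j, ((P j).cp 1 : ℝ) * w j = ∑ j, ((P j).cm 1 : ℝ) * w j)
    (hpos : ∑ j, ((P j).cm 2 : ℝ) * w j ≤ ∑ j, ((P j).cp 2 : ℝ) * w j)
    {F : ℝ → ℝ} (hobj : ∀ p, ∑ j, patProb (fun _ => p) (P j) * w j = F p)
    (hmax : ∀ p ∈ Set.Icc (0 : ℝ) 1, p ≠ pStar k → F p < F (pStar k))
    (hα : F (pStar k) = alphaStar k) : IsHardPrimal k (∑ j, Pi.single (P j) (w j)) := by
  refine isHardPrimal_of (fun c => ?_) ?_ ?_ ?_ ?_ (fun p => ?_) hmax hα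
  · simp only [Finset.sum_apply, Pi.single_apply]
    exact Finset.sum_nonneg fun j _ => by split_ifs <;> simp [hw j]
  · have := sum_mul_sum_pi_single P w (fun c => if c.IsPos then 1 else 0)
    simp only [boole_mul, ← Finset.sum_filter] at this
    rwa [this]
  all_goals
    simp only [Wp, Wm, sum_mul_sum_pi_single]
    first | assumption | exact hobj p

end HardPrimal

theorem exists_isHardPrimal_even (n : ℕ) : ∃ W, IsHardPrimal (2 * n + 2) W := by
  set p₀ : ℝ := (n + 2) / (2 * n + 3) with hp₀
  set ρ : ℝ := (n + 2) ^ 2 / (2 * n + 3) with hρ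
  have hpStar : pStar (2 * n + 2) = p₀ := by
    rw [pStar_eq (m := n + 1) (by omega), hp₀]; push_cast; ring
  let P : Fin 3 → Ptn (2 * n + 2) 1 := ![Ptn.outer (n + 1) 0 (n + 1) 0 (by ring),
    Ptn.outer 0 (n + 1) 0 (n + 1) (by ring), Ptn.outer 0 (n + 2) 0 n (by ring)]
  let w : Fin 3 → ℝ := ![1, 1 / (2 * n + 3), 2 * (n + 1) ^ 2 / ((n + 2) * (2 * n + 3))]
  have hw : ∀ j, 0 ≤ w j := fun j => by fin_cases j <;> simp [w] <;> positivity
  -- The weights make the class `-1` constraint tight and turn the objective into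
  -- `p^(n+1) (1-p)^n ((1 + w 1) (1 - p) + w 2 p) = 2 / (n + 2) · p^(n+1) (1-p)^n (ρ - p)`.
  refine ⟨_, isHardPrimal_sum_pi_single P hw ?_ ?_ ?_ ?_
    (F := fun p => 2 / (n + 2) * (p ^ (n + 1) * (1 - p) ^ n * (ρ - p) ^ 1)) ?_ ?_ ?_⟩
  · simp [Finset.sum_filter, Fin.sum_univ_three, P, w]
  · simp [Fin.sum_univ_three, P, w]
    apply le_of_eq
    field_simp
    ring
  · simp [Fin.sum_univ_three, P, w]
  · simp [Fin.sum_univ_three, P, w]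
    field_simp
    nlinarith
  · intro p
    simp [Fin.sum_univ_three, P, w]
    rw [pow_succ (1 - p) n, pow_succ p (n + 1), hρ]
    field_simp
    ring
  · intro p hp hne
    rw [hpStar] at hne ⊢
    have hcrit : ((n + 1 : ℕ) : ℝ) * ((1 - p₀) * (ρ - p₀))
        = (n : ℝ) * (p₀ * (ρ - p₀)) + ((1 : ℕ) : ℝ) * (p₀ * (1 - p₀)) := by
      rw [hp₀, hρ]; push_cast; field_simp; ring
    exact mul_lt_mul_of_pos_left (pow_mul_pow_mul_pow_lt_of_critical (by omega)
      ⟨by positivity, by rw [hp₀, div_lt_one (by positivity)]; linarith⟩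
      (by rw [hρ, le_div_iff₀ (by positivity)]; nlinarith) hcrit hp hne) (by positivity)
  · rw [hpStar, alphaStar, hpStar, show (2 * n + 2) / 2 = n + 1 by omega]
    have h : 2 / (n + 2 : ℝ) * (ρ - p₀) = 2 * (1 - p₀) := by
      rw [hp₀, hρ]; field_simp; ring
    rw [mul_pow, pow_succ (1 - p₀) n, pow_one]
    linear_combination (p₀ ^ (n + 1) * (1 - p₀) ^ n) * h

theorem exists_isHardPrimal_odd (n : ℕ) : ∃ W, IsHardPrimal (2 * n + 3) W := by
  set p₀ : ℝ := (n + 2) / (2 * n + 3) with hp₀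
  have hpStar : pStar (2 * n + 3) = p₀ := by
    rw [pStar_eq (m := n + 1) (by omega), hp₀]; push_cast; ring
  let P : Fin 3 → Ptn (2 * n + 3) 1 := ![Ptn.outer (n + 1) 0 (n + 2) 0 (by ring),
    Ptn.outer 0 (n + 2) 0 (n + 1) (by ring), Ptn.outer (n + 1) (n + 2) 0 0 (by ring)]
  let w : Fin 3 → ℝ := ![1, 1, 2 * (n + 1) / (n + 2)]
  have hw : ∀ j, 0 ≤ w j := fun j => by fin_cases j <;> simp [w]; positivity
  -- All three patterns have probability `p^(n+2) (1-p)^(n+1)`; the third one only scales the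
  -- objective so that its maximum is `α*`. There is no `ρ`-factor, so `ρ = 1, c = 0` below.
  refine ⟨_, isHardPrimal_sum_pi_single P hw ?_ ?_ ?_ ?_
    (F := fun p => (4 * n + 6) / (n + 2) * (p ^ (n + 2) * (1 - p) ^ (n + 1) * (1 - p) ^ 0))
    ?_ ?_ ?_⟩
  · simp [Finset.sum_filter, Fin.sum_univ_three, P, w]
  · simp [Fin.sum_univ_three, P, w]
    have : (0 : ℝ) ≤ 2 * (n + 1) / (n + 2) := by positivity
    nlinarith
  · simp [Fin.sum_univ_three, P, w]
  · simp [Fin.sum_univ_three, P, w]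
  · intro p
    simp [Fin.sum_univ_three, P, w]
    field_simp
    ring
  · intro p hp hne
    rw [hpStar] at hne ⊢
    have hcrit : ((n + 2 : ℕ) : ℝ) * ((1 - p₀) * (1 - p₀))
        = ((n + 1 : ℕ) : ℝ) * (p₀ * (1 - p₀))
          + ((0 : ℕ) : ℝ) * (p₀ * (1 - p₀)) := by
      rw [hp₀]; push_cast; field_simp; ring
    exact mul_lt_mul_of_pos_left (pow_mul_pow_mul_pow_lt_of_critical (by omega)
      ⟨by positivity, by rw [hp₀, div_lt_one (by positivity)]; linarith⟩
      le_rfl hcrit hp hne) (by positivity)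
  · rw [hpStar, alphaStar, hpStar, show (2 * n + 3) / 2 = n + 1 by omega]
    have h : (4 * n + 6) / (n + 2 : ℝ) * p₀ = 2 := by
      rw [hp₀]; field_simp; ring
    rw [mul_pow, pow_succ p₀ (n + 1), pow_zero, mul_one]
    linear_combination (p₀ ^ (n + 1) * (1 - p₀) ^ (n + 1)) * h

/-- **A uniformly hard primal solution for superoblivious algorithms**
(Lemma `primal-two`): for every `k ≥ 2` there is a feasible solution `W` of the
primal LP for the bias partition `t = (0,1)` (so `ℓ = 1`, `L = 3`) whose
objective value `∑_c prob^{(p)}(c)·W(c)` is at most `α*_k` for every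
`p ∈ [0,1]`, with equality if and only if `p = p*_k`. -/
theorem primal_two (k : ℕ) (hk : 2 ≤ k) :
    ∃ W : Ptn k 1 → ℝ,
      (∀ c, 0 ≤ W c) ∧
      (∑ c ∈ Finset.univ.filter (fun c : Ptn k 1 => c.IsPos), W c) = 1 ∧
      (∀ r, r ≤ 2 →
        tLo T01 r * (Wp W r + Wm W r) ≤ Wp W r - Wm W r ∧
        Wp W r - Wm W r ≤ tHi T01 r * (Wp W r + Wm W r)) ∧
      ∀ p ∈ Set.Icc (0 : ℝ) 1,
        (∑ c, patProb (fun _ => p) c * W c) ≤ alphaStar k ∧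
        ((∑ c, patProb (fun _ => p) c * W c) = alphaStar k ↔ p = pStar k) := by
  obtain ⟨n, rfl | rfl⟩ : ∃ n, k = 2 * n + 2 ∨ k = 2 * n + 3 := ⟨k / 2 - 1, by omega⟩
  · exact exists_isHardPrimal_even n
  · exact exists_isHardPrimal_odd n
end
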